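/- arXiv:2403.14779 — 9 statements merged into one kernel-verified Lean document; each statement's English description precedes it below -/
import Mathlib

section
/- A group G is left-orderable if and only if there exist a nonempty linearly ordered set X and a faithful action of G on X by order-preserving bijections. -/
/-!
A left order on `G` makes the left-regular action of `G` on itself an action by order
automorphisms, and it is faithful. Conversely, if `G` acts faithfully on a linear order `X` by
order automorphisms, enumerate `X` along a well-order `ι` and compare `g, h ∈ G` by the
lexicographic order of the orbits `i ↦ g • xᵢ` and `i ↦ h • xᵢ`: well-foundedness of `ι` makes
this a linear order on functions, faithfulness makes `g ↦ (i ↦ g • xᵢ)` injective, and left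
multiplication by `z` post-composes both orbits with the order automorphism `x ↦ z • x`, which
preserves the lexicographic order.
-/

/-- A left order on a group `G`: a strict linear order invariant under left multiplication. -/
structure IsLeftOrder {G : Type*} [Group G] (r : G → G → Prop) : Prop where
  irrefl : ∀ x, ¬ r x x
  trans : ∀ x y z, r x y → r y z → r x z
  total : ∀ x y, x ≠ y → r x y ∨ r y x
  mul_left : ∀ x y z, r x y → r (z * x) (z * y)

universe u

open Function

namespace IsLeftOrder

variable {G : Type*} [Group G] {r : G → G → Prop}

theorem isStrictTotalOrder (h : IsLeftOrder r) : IsStrictTotalOrder G r where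
  irrefl := h.irrefl
  trans := h.trans
  trichotomous x y hxy hyx := by_contra fun hne => (h.total x y hne).elim hxy hyx

noncomputable abbrev toLinearOrder (h : IsLeftOrder r) : LinearOrder G :=
  @linearOrderOfSTO G r h.isStrictTotalOrder (Classical.decRel r)

theorem mulLeftStrictMono (h : IsLeftOrder r) :
    letI := h.toLinearOrder
    MulLeftStrictMono G :=
  ⟨fun z a b => h.mul_left a b z⟩

end IsLeftOrder

theorem isLeftOrder_lt {G : Type*} [Group G] [LinearOrder G] [MulLeftStrictMono G] :
    IsLeftOrder (G := G) (· < ·) where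
  irrefl := lt_irrefl
  trans _ _ _ := lt_trans
  total _ _ := Ne.lt_or_gt
  mul_left _ _ z h := mul_lt_mul_right h z

namespace OrderIso

variable {G : Type*} [Group G] [LE G] [MulLeftMono G]

def mulLeftHom : G →* (G ≃o G) where
  toFun := OrderIso.mulLeft
  map_one' := by ext; simp
  map_mul' a b := by ext; simp [mul_assoc]

theorem mulLeftHom_injective : Injective (mulLeftHom (G := G)) := fun a b hab => by
  simpa [mulLeftHom] using DFunLike.congr_fun hab 1

end OrderIso

theorem Pi.toLex_comp_lt_toLex_comp {ι α β : Type*} [LT ι] [Preorder α] [Preorder β] {f : α → β}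
    (hf : StrictMono f) {x y : ι → α} (hxy : toLex x < toLex y) :
    toLex (f ∘ x) < toLex (f ∘ y) :=
  let ⟨i, hbelow, hi⟩ := hxy
  ⟨i, fun j hj => congrArg f (hbelow j hj), hf hi⟩

theorem exists_isLeftOrder_of_injective_orbit {G X ι : Type*} [Group G] [LinearOrder X]
    [LinearOrder ι] [WellFoundedLT ι] (ρ : G →* (X ≃o X)) (e : ι → X)
    (he : Injective fun g => ⇑(ρ g) ∘ e) : ∃ r : G → G → Prop, IsLeftOrder r := by
  let orbit : G → Lex (ι → X) := fun g => toLex (⇑(ρ g) ∘ e)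
  let : LinearOrder G := LinearOrder.lift' orbit he
  have : MulLeftStrictMono G := ⟨fun z a b (hab : orbit a < orbit b) => by
    change orbit (z * a) < orbit (z * b)
    simpa [orbit, comp_assoc] using Pi.toLex_comp_lt_toLex_comp (ρ z).strictMono hab⟩
  exact ⟨_, isLeftOrder_lt⟩

/-- A group is left-orderable iff it acts faithfully on some nonempty linearly ordered set
by order-preserving bijections. -/
theorem leftOrderable_iff_faithful_order_action {G : Type u} [Group G] :
    (∃ r : G → G → Prop, IsLeftOrder r) ↔
      ∃ (X : Type u) (_ : LinearOrder X), Nonempty X ∧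
        ∃ ρ : G →* (X ≃o X), Function.Injective ρ := by
  constructor
  · rintro ⟨r, hr⟩
    let := hr.toLinearOrder
    have := hr.mulLeftStrictMono
    have := mulLeftMono_of_mulLeftStrictMono G
    exact ⟨G, inferInstance, ⟨1⟩, OrderIso.mulLeftHom, OrderIso.mulLeftHom_injective⟩
  · rintro ⟨X, _, -, ρ, hρ⟩
    obtain ⟨e⟩ : Nonempty ((Cardinal.mk X).ord.ToType ≃ X) := Cardinal.eq.1 (by simp)
    exact exists_isLeftOrder_of_injective_orbit ρ e
      ((e.surjective.injective_comp_right.comp DFunLike.coe_injective).comp hρ)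
end

section
/- Let (G, <) be a countable group equipped with a bi-order. Then there exists an injective group homomorphism ρ : G → Homeo₊(ℝ) such that: (i) for every g ∈ G with 1 < g, sup{x ∈ ℝ : ρ(g)(x) > x} > sup{x ∈ ℝ : ρ(g)(x) < x}, the suprema being taken in the extended reals [−∞, +∞] with sup ∅ = −∞; and (ii) for all g, h ∈ G with g ≫ h, sup{x ∈ ℝ : ρ(g)(x) ≠ x} > sup{x ∈ ℝ : ρ(h)(x) ≠ x}. -/
/-- A bi-order on a group `G`: a strict linear order (irreflexive, transitive, total)
invariant under left and right multiplication. -/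
structure IsBiOrder {G : Type*} [Group G] (r : G → G → Prop) : Prop where
  irrefl : ∀ x, ¬ r x x
  trans : ∀ x y z, r x y → r y z → r x z
  total : ∀ x y, x ≠ y → r x y ∨ r y x
  mul_left : ∀ x y z, r x y → r (z * x) (z * y)
  mul_right : ∀ x y z, r x y → r (x * z) (y * z)

/-- The supremum of a set of reals, computed in the extended reals `[-∞, +∞]`
(so that `realSup ∅ = ⊥ = -∞`). -/
noncomputable def realSup (s : Set ℝ) : EReal :=
  sSup ((fun x : ℝ => (x : EReal)) '' s)

/-!
For a nontrivial `s ∈ G` let `C_s` be the convex subgroup generated by `s` and `D_s ⊊ C_s` the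
largest convex subgroup not containing `s`. The points on which `G` acts are triples
`(s, D_s x, q)` with `q ∈ ℚ`, ordered lexicographically: first by `C_s` (inclusion), then by the
coset `D_s x` (cosets of a convex subgroup are linearly ordered), then by `q`; `g` sends
`(s, D_s x, q)` to `(g s g⁻¹, D_{gsg⁻¹} g x, q)`. This is a countable dense order without
endpoints, hence a copy of `ℚ`, and the action extends to `ℝ`.

Above the base points `(g, D_g, q)` of `g > 1`, every point has a seed `s` with `g ∈ C_s`: if
`C_s = C_g` then `g` moves the point up, and otherwise `g ∈ D_s` fixes it. Likewise if `g ≫ h`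
then `h ∈ D_s` fixes all these points, while `g` moves the base points themselves. Hence the
suprema of (i) and (ii) are separated by the images of the base points.
-/

open Set Function

section ArchLE

variable {G : Type*} [Group G] [LinearOrder G] {a b c g h s t u w x y z : G}

/-- `a` lies in the convex subgroup generated by `b`. -/
def ArchLE (a b : G) : Prop := ∃ n : ℕ, |a|ₘ ≤ |b|ₘ ^ n

theorem archLE_of_mabs_le (h : |a|ₘ ≤ |b|ₘ) : ArchLE a b := ⟨1, by rwa [pow_one]⟩

theorem ArchLE.refl (a : G) : ArchLE a a := archLE_of_mabs_le le_rfl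

instance : Std.Refl (ArchLE (G := G)) := ⟨ArchLE.refl⟩

theorem archLE_total (a b : G) : ArchLE a b ∨ ArchLE b a :=
  (le_total |a|ₘ |b|ₘ).imp archLE_of_mabs_le archLE_of_mabs_le

@[simp]
theorem archLE_inv_left : ArchLE a⁻¹ b ↔ ArchLE a b := by simp [ArchLE]

@[simp]
theorem archLE_inv_right : ArchLE a b⁻¹ ↔ ArchLE a b := by simp [ArchLE]

theorem archLE_mul_inv_comm : ArchLE s (x * y⁻¹) ↔ ArchLE s (y * x⁻¹) := by
  rw [← archLE_inv_right, mul_inv_rev, inv_inv]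

variable [MulLeftMono G]

theorem not_archLE_of_forall_zpow_lt (H : ∀ n : ℤ, h ^ n < g) : ¬ ArchLE g h := by
  rintro ⟨n, hn⟩
  have hg : g ≤ |h|ₘ ^ n := (le_mabs_self g).trans hn
  rcases le_total h 1 with h1 | h1
  · rw [mabs_of_le_one h1, inv_pow, ← zpow_natCast, ← zpow_neg] at hg
    exact (H (-n)).not_ge hg
  · rw [mabs_of_one_le h1, ← zpow_natCast] at hg
    exact (H n).not_ge hg

variable [MulRightMono G]

theorem ArchLE.trans (hab : ArchLE a b) (hbc : ArchLE b c) : ArchLE a c := by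
  obtain ⟨m, hm⟩ := hab
  obtain ⟨n, hn⟩ := hbc
  exact ⟨n * m, hm.trans ((pow_le_pow_left' hn m).trans_eq (pow_mul _ n m).symm)⟩

instance : IsTrans G ArchLE := ⟨fun _ _ _ => ArchLE.trans⟩

theorem archLE_one_iff : ArchLE a 1 ↔ a = 1 :=
  ⟨fun ⟨n, hn⟩ => mabs_le_one.1 (by simpa using hn), by rintro rfl; exact .refl 1⟩

theorem ArchLE.mul (ha : ArchLE a c) (hb : ArchLE b c) : ArchLE (a * b) c := by
  obtain ⟨m, hm⟩ := ha
  obtain ⟨n, hn⟩ := hb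
  refine ⟨m + n, mabs_le'.2 ⟨?_, ?_⟩⟩
  · rw [pow_add]
    exact mul_le_mul' ((le_mabs_self a).trans hm) ((le_mabs_self b).trans hn)
  · rw [mul_inv_rev, add_comm, pow_add]
    exact mul_le_mul' ((inv_le_mabs b).trans hn) ((inv_le_mabs a).trans hm)

theorem not_archLE_mul (ha : ¬ ArchLE s a) (hb : ¬ ArchLE s b) : ¬ ArchLE s (a * b) := by
  intro h
  rcases archLE_total a b with hab | hba
  · exact hb (h.trans (hab.mul (.refl b)))
  · exact ha (h.trans ((ArchLE.refl a).mul hba))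

theorem ArchLE.left_of_mul (h : ArchLE s (a * b)) (hb : ¬ ArchLE s b) : ArchLE s a :=
  by_contra fun ha => not_archLE_mul ha hb h

theorem ArchLE.right_of_mul (h : ArchLE s (a * b)) (ha : ¬ ArchLE s a) : ArchLE s b :=
  by_contra fun hb => not_archLE_mul ha hb h

theorem mabs_conj (g a : G) : |g * a * g⁻¹|ₘ = g * |a|ₘ * g⁻¹ := by
  have hconj : Monotone fun x => g * x * g⁻¹ := fun _ _ hxy =>
    mul_le_mul_left (mul_le_mul_right hxy g) g⁻¹
  rw [mabs, conj_inv, mabs]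
  exact hconj.map_max.symm

theorem archLE_conj_iff : ArchLE (g * a * g⁻¹) (g * b * g⁻¹) ↔ ArchLE a b := by
  simp only [ArchLE, mabs_conj, conj_pow, mul_le_mul_iff_left, mul_le_mul_iff_right]

theorem antisymmRel_conj_of_archLE (h : ArchLE g s) : AntisymmRel ArchLE (g * s * g⁻¹) s := by
  refine ⟨(h.mul (.refl s)).mul (archLE_inv_left.2 h), ?_⟩
  have hg : ArchLE g (g * s * g⁻¹) := by simpa using archLE_conj_iff (g := g) |>.2 h
  simpa [mul_assoc] using ((archLE_inv_left.2 hg).mul (.refl _)).mul hg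

theorem archLE_of_le_of_le_one (hba : b ≤ a) (ha : a ≤ 1) : ArchLE a b := by
  apply archLE_of_mabs_le
  rw [mabs_of_le_one ha, mabs_of_le_one (hba.trans ha)]
  exact inv_le_inv_iff.2 hba

theorem lt_of_archLE_of_not_archLE (hw : ArchLE s w) (hw1 : w ≤ 1) (hu : ¬ ArchLE s u) : w < u :=
  lt_of_not_ge fun huw => hu (hw.trans (archLE_of_le_of_le_one huw hw1))

end ArchLE

theorem mul_mul_inv_eq_conj {G : Type*} [Group G] (g x y : G) :
    g * x * (g * y)⁻¹ = g * (x * y⁻¹) * g⁻¹ := by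
  group

section Coset

variable {G : Type*} [Group G] [LinearOrder G] {g s t x y z : G}

/-- `D_s x = D_s y`, where `D_s = {w | ¬ ArchLE s w}` is the largest convex subgroup of `G`
not containing `s`. -/
def CosetEquiv (s x y : G) : Prop := ¬ ArchLE s (x * y⁻¹)

/-- `D_s x < D_s y` in the order that right cosets of the convex subgroup `D_s` inherit from `G`. -/
def CosetLT (s x y : G) : Prop := ArchLE s (x * y⁻¹) ∧ x < y

theorem CosetEquiv.symm (h : CosetEquiv s x y) : CosetEquiv s y x :=
  mt archLE_mul_inv_comm.1 h

variable [MulLeftMono G] [MulRightMono G]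

theorem cosetEquiv_refl (hs : s ≠ 1) (x : G) : CosetEquiv s x x := by
  rwa [CosetEquiv, mul_inv_cancel, archLE_one_iff]

theorem CosetEquiv.trans (hxy : CosetEquiv s x y) (hyz : CosetEquiv s y z) : CosetEquiv s x z := by
  simpa [CosetEquiv, mul_assoc] using not_archLE_mul hxy hyz

theorem CosetLT.trans (hxy : CosetLT s x y) (hyz : CosetLT s y z) : CosetLT s x z :=
  ⟨hxy.1.trans (archLE_of_le_of_le_one (mul_le_mul_right (inv_le_inv_iff.2 hyz.2.le) x)
    (mul_inv_le_one_iff_le.2 hxy.2.le)), hxy.2.trans hyz.2⟩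

theorem CosetLT.trans_cosetEquiv (hxy : CosetLT s x y) (hyz : CosetEquiv s y z) :
    CosetLT s x z := by
  refine ⟨ArchLE.left_of_mul (b := z * y⁻¹) (by simpa [mul_assoc] using hxy.1) hyz.symm, ?_⟩
  have := lt_of_archLE_of_not_archLE hxy.1 (mul_inv_le_one_iff_le.2 hxy.2.le) hyz.symm
  exact (mul_lt_mul_iff_right _).1 this

theorem CosetEquiv.trans_cosetLT (hxy : CosetEquiv s x y) (hyz : CosetLT s y z) :
    CosetLT s x z := by
  refine ⟨ArchLE.right_of_mul (a := y * x⁻¹) (by simpa [mul_assoc] using hyz.1) hxy.symm, ?_⟩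
  have := lt_of_archLE_of_not_archLE hyz.1 (mul_inv_le_one_iff_le.2 hyz.2.le) hxy.symm
  exact inv_lt_inv_iff.1 ((mul_lt_mul_iff_left _).1 this)

theorem cosetLT_or_cosetEquiv_or_cosetLT (hs : s ≠ 1) (x y : G) :
    CosetLT s x y ∨ CosetEquiv s x y ∨ CosetLT s y x := by
  by_cases h : ArchLE s (x * y⁻¹)
  · rcases lt_trichotomy x y with hlt | rfl | hgt
    · exact .inl ⟨h, hlt⟩
    · exact absurd h (cosetEquiv_refl hs x)
    · exact .inr (.inr ⟨archLE_mul_inv_comm.1 h, hgt⟩)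
  · exact .inr (.inl h)

theorem cosetLT_congr (h : AntisymmRel ArchLE s t) : CosetLT s x y ↔ CosetLT t x y :=
  and_congr_left' ⟨h.2.trans, h.1.trans⟩

theorem cosetEquiv_congr (h : AntisymmRel ArchLE s t) : CosetEquiv s x y ↔ CosetEquiv t x y :=
  not_congr ⟨h.2.trans, h.1.trans⟩

theorem cosetEquiv_conj_iff : CosetEquiv (g * s * g⁻¹) (g * x) (g * y) ↔ CosetEquiv s x y := by
  rw [CosetEquiv, CosetEquiv, mul_mul_inv_eq_conj, archLE_conj_iff]

theorem cosetLT_conj_iff : CosetLT (g * s * g⁻¹) (g * x) (g * y) ↔ CosetLT s x y := by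
  rw [CosetLT, CosetLT, mul_mul_inv_eq_conj, archLE_conj_iff, mul_lt_mul_iff_left]

end Coset

/-- A point of the realization before identification: a nontrivial `seed` `s`, standing for the
convex jump `D_s ⊊ C_s` it determines, a representative `rep` of the coset `D_s * rep`, and a
rational coordinate. -/
@[ext]
structure PrePoint (G : Type*) [One G] where
  seed : G
  seed_ne_one : seed ≠ 1
  rep : G
  coord : ℚ

namespace PrePoint

variable {G : Type*} [Group G] {g k : G} {a b c : PrePoint G}

instance : SMul G (PrePoint G) where
  smul g a := ⟨g * a.seed * g⁻¹, conj_eq_one_iff.not.2 a.seed_ne_one, g * a.rep, a.coord⟩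

@[simp] theorem smul_seed (g : G) (a : PrePoint G) : (g • a).seed = g * a.seed * g⁻¹ := rfl
@[simp] theorem smul_rep (g : G) (a : PrePoint G) : (g • a).rep = g * a.rep := rfl
@[simp] theorem smul_coord (g : G) (a : PrePoint G) : (g • a).coord = a.coord := rfl

instance : MulAction G (PrePoint G) where
  one_smul a := by ext <;> simp
  mul_smul g k a := by ext <;> simp [mul_assoc]

def base (g : G) (hg : g ≠ 1) (q : ℚ) : PrePoint G := ⟨g, hg, 1, q⟩

variable [LinearOrder G]

instance : LE (PrePoint G) where
  le a b := ¬ ArchLE b.seed a.seed ∨ (AntisymmRel ArchLE a.seed b.seed ∧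
    (CosetLT a.seed a.rep b.rep ∨ (CosetEquiv a.seed a.rep b.rep ∧ a.coord ≤ b.coord)))

instance : LT (PrePoint G) where
  lt a b := ¬ ArchLE b.seed a.seed ∨ (AntisymmRel ArchLE a.seed b.seed ∧
    (CosetLT a.seed a.rep b.rep ∨ (CosetEquiv a.seed a.rep b.rep ∧ a.coord < b.coord)))

theorem archLE_seed_of_base_le {hg : g ≠ 1} {q : ℚ} (h : base g hg q ≤ a) : ArchLE g a.seed :=
  h.elim (archLE_total _ _).resolve_right fun h => h.1.1

variable [MulLeftMono G] [MulRightMono G]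

protected theorem le_refl (a : PrePoint G) : a ≤ a :=
  .inr ⟨.rfl, .inr ⟨cosetEquiv_refl a.seed_ne_one a.rep, le_rfl⟩⟩

protected theorem le_trans : a ≤ b → b ≤ c → a ≤ c := by
  rintro (hab | ⟨sab, hab⟩) (hbc | ⟨sbc, hbc⟩)
  · exact .inl fun hca => hbc (hca.trans ((archLE_total _ _).resolve_right hab))
  · exact .inl fun hca => hab (sbc.1.trans hca)
  · exact .inl fun hca => hbc (hca.trans sab.1)
  refine .inr ⟨sab.trans sbc, ?_⟩
  rw [← cosetLT_congr sab, ← cosetEquiv_congr sab] at hbc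
  rcases hab with hab | ⟨hab, hq⟩ <;> rcases hbc with hbc | ⟨hbc, hq'⟩
  · exact .inl (hab.trans hbc)
  · exact .inl (hab.trans_cosetEquiv hbc)
  · exact .inl (hab.trans_cosetLT hbc)
  · exact .inr ⟨hab.trans hbc, hq.trans hq'⟩

protected theorem le_total (a b : PrePoint G) : a ≤ b ∨ b ≤ a := by
  by_cases hba : ArchLE b.seed a.seed
  · by_cases hab : ArchLE a.seed b.seed
    · have hb : CosetLT a.seed b.rep a.rep ↔ CosetLT b.seed b.rep a.rep := cosetLT_congr ⟨hab, hba⟩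
      rcases cosetLT_or_cosetEquiv_or_cosetLT a.seed_ne_one a.rep b.rep with h | h | h
      · exact .inl (.inr ⟨⟨hab, hba⟩, .inl h⟩)
      · rcases le_total a.coord b.coord with hq | hq
        · exact .inl (.inr ⟨⟨hab, hba⟩, .inr ⟨h, hq⟩⟩)
        · exact .inr (.inr ⟨⟨hba, hab⟩, .inr ⟨(cosetEquiv_congr ⟨hab, hba⟩).1 h.symm, hq⟩⟩)
      · exact .inr (.inr ⟨⟨hba, hab⟩, .inl (hb.1 h)⟩)
    · exact .inr (.inl hab)
  · exact .inl (.inl hba)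

protected theorem lt_iff_le_not_ge (a b : PrePoint G) : a < b ↔ a ≤ b ∧ ¬ b ≤ a := by
  constructor
  · rintro (hs | ⟨hs, hx | ⟨hx, hq⟩⟩)
    · refine ⟨.inl hs, ?_⟩
      rintro (h | ⟨h, -⟩)
      · exact (archLE_total _ _).elim h hs
      · exact hs h.1
    · refine ⟨.inr ⟨hs, .inl hx⟩, ?_⟩
      rintro (h | ⟨-, h | ⟨h, -⟩⟩)
      · exact h hs.1
      · exact hx.2.asymm h.2
      · exact ((cosetEquiv_congr hs.symm).1 h).symm hx.1
    · refine ⟨.inr ⟨hs, .inr ⟨hx, hq.le⟩⟩, ?_⟩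
      rintro (h | ⟨-, h | ⟨-, h⟩⟩)
      · exact h hs.1
      · exact hx.symm ((cosetLT_congr hs.symm).1 h).1
      · exact hq.not_ge h
  · rintro ⟨hs | ⟨hs, hx | ⟨hx, hq⟩⟩, hba⟩
    · exact .inl hs
    · exact .inr ⟨hs, .inl hx⟩
    · refine .inr ⟨hs, .inr ⟨hx, hq.lt_of_ne fun hq' => hba ?_⟩⟩
      exact .inr ⟨hs.symm, .inr ⟨(cosetEquiv_congr hs).1 hx.symm, hq'.ge⟩⟩

instance : Preorder (PrePoint G) where
  le_refl := PrePoint.le_refl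
  le_trans _ _ _ := PrePoint.le_trans
  lt_iff_le_not_ge := PrePoint.lt_iff_le_not_ge

instance : Std.Total (α := PrePoint G) (· ≤ ·) := ⟨PrePoint.le_total⟩

theorem mk_lt_mk_of_coord_lt (s : G) (hs : s ≠ 1) (x : G) {p q : ℚ} (h : p < q) :
    (⟨s, hs, x, p⟩ : PrePoint G) < ⟨s, hs, x, q⟩ :=
  .inr ⟨.rfl, .inr ⟨cosetEquiv_refl hs x, h⟩⟩

theorem exists_between_of_lt (h : a < b) : ∃ c, a < c ∧ c < b := by
  rcases h with hs | ⟨hs, hx | ⟨hx, hq⟩⟩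
  · exact ⟨_, mk_lt_mk_of_coord_lt _ a.seed_ne_one _ (lt_add_one a.coord), .inl hs⟩
  · exact ⟨_, mk_lt_mk_of_coord_lt _ a.seed_ne_one _ (lt_add_one a.coord), .inr ⟨hs, .inl hx⟩⟩
  · exact ⟨_, mk_lt_mk_of_coord_lt _ a.seed_ne_one _ (left_lt_add_div_two.2 hq),
      .inr ⟨hs, .inr ⟨hx, add_div_two_lt_right.2 hq⟩⟩⟩

theorem smul_le_smul (g : G) (h : a ≤ b) : g • a ≤ g • b := by
  simpa only [LE.le, smul_seed, smul_rep, smul_coord, AntisymmRel, archLE_conj_iff,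
    cosetLT_conj_iff, cosetEquiv_conj_iff] using h

theorem smul_antisymmRel_of_not_archLE (h : ¬ ArchLE a.seed g) :
    AntisymmRel (· ≤ ·) (g • a) a := by
  have hs : AntisymmRel ArchLE (g * a.seed * g⁻¹) a.seed :=
    antisymmRel_conj_of_archLE ((archLE_total _ _).resolve_left h)
  have hx : CosetEquiv a.seed (g * a.rep) a.rep := by simpa [CosetEquiv] using h
  exact ⟨.inr ⟨hs, .inr ⟨(cosetEquiv_congr hs.symm).1 hx, le_rfl⟩⟩,
    .inr ⟨hs.symm, .inr ⟨hx.symm, le_rfl⟩⟩⟩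

theorem lt_smul_of_one_lt (hg : 1 < g) (h : AntisymmRel ArchLE g a.seed) : a < g • a :=
  .inr ⟨(antisymmRel_conj_of_archLE h.1).symm,
    .inl ⟨by simpa using h.2, lt_mul_of_one_lt_left' _ hg⟩⟩

theorem le_smul_of_base_le (hg : 1 < g) {q : ℚ} (h : base g hg.ne' q ≤ a) : a ≤ g • a := by
  by_cases hs : ArchLE a.seed g
  · exact (lt_smul_of_one_lt hg ⟨archLE_seed_of_base_le h, hs⟩).le
  · exact (smul_antisymmRel_of_not_archLE hs).ge

theorem smul_antisymmRel_of_base_le (hgk : ¬ ArchLE g k) {hg : g ≠ 1} {q : ℚ}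
    (h : base g hg q ≤ a) : AntisymmRel (· ≤ ·) (k • a) a :=
  smul_antisymmRel_of_not_archLE fun hk => hgk ((archLE_seed_of_base_le h).trans hk)

end PrePoint

def antisymmetrizationAction {G α : Type*} [Group G] [Preorder α] [MulAction G α]
    (h : ∀ (g : G) {a b : α}, a ≤ b → g • a ≤ g • b) :
    G →* (Antisymmetrization α (· ≤ ·) ≃o Antisymmetrization α (· ≤ ·)) where
  toFun g := Equiv.toOrderIso
    { toFun := (⟨(g • ·), fun _ _ => h g⟩ : α →o α).antisymmetrization
      invFun := (⟨(g⁻¹ • ·), fun _ _ => h g⁻¹⟩ : α →o α).antisymmetrization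
      left_inv x := by
        induction x using Antisymmetrization.ind
        exact congrArg _ (inv_smul_smul g _)
      right_inv x := by
        induction x using Antisymmetrization.ind
        exact congrArg _ (smul_inv_smul g _) }
    (OrderHom.monotone _) (OrderHom.monotone _)
  map_one' := by
    ext x
    induction x using Antisymmetrization.ind
    exact congrArg _ (one_smul G _)
  map_mul' g k := by
    ext x
    induction x using Antisymmetrization.ind
    exact congrArg _ (mul_smul g k _)

section

variable (G : Type*) [Group G] [LinearOrder G] [MulLeftMono G] [MulRightMono G]

abbrev Point := Antisymmetrization (PrePoint G) (· ≤ ·)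

noncomputable instance : DecidableLE (PrePoint G) := Classical.decRel _

noncomputable instance : DecidableLT (PrePoint G) := Classical.decRel _

instance [Countable G] : Countable (Point G) := by
  have : Countable (PrePoint G) :=
    (Injective.countable (f := fun a : PrePoint G => (a.seed, a.rep, a.coord))
      fun a b h => by cases a; cases b; simp_all)
  exact Quotient.countable

instance : DenselyOrdered (Point G) where
  dense x y h := by
    induction x using Antisymmetrization.ind
    induction y using Antisymmetrization.ind
    obtain ⟨c, hac, hcb⟩ := PrePoint.exists_between_of_lt h
    exact ⟨toAntisymmetrization _ c, hac, hcb⟩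

instance : NoMaxOrder (Point G) where
  exists_gt x := by
    induction x using Antisymmetrization.ind with | _ a
    exact ⟨toAntisymmetrization _ _,
      PrePoint.mk_lt_mk_of_coord_lt a.seed a.seed_ne_one a.rep (lt_add_one a.coord)⟩

instance : NoMinOrder (Point G) where
  exists_lt x := by
    induction x using Antisymmetrization.ind with | _ a
    exact ⟨toAntisymmetrization _ _,
      PrePoint.mk_lt_mk_of_coord_lt a.seed a.seed_ne_one a.rep (sub_one_lt a.coord)⟩

namespace Point

def action : G →* (Point G ≃o Point G) :=
  antisymmetrizationAction fun g _ _ => PrePoint.smul_le_smul g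

variable {G}

def base (g : G) (hg : g ≠ 1) (q : ℚ) : Point G := toAntisymmetrization _ (PrePoint.base g hg q)

theorem base_lt_base {g : G} {hg : g ≠ 1} {p q : ℚ} (h : p < q) : base g hg p < base g hg q :=
  PrePoint.mk_lt_mk_of_coord_lt g hg 1 h

theorem le_action_of_base_le {g : G} (hg : 1 < g) {x : Point G} (hx : base g hg.ne' 0 ≤ x) :
    x ≤ action G g x := by
  induction x using Antisymmetrization.ind
  exact PrePoint.le_smul_of_base_le hg hx

theorem action_eq_of_base_le {g k : G} (hgk : ¬ ArchLE g k) {hg : g ≠ 1} {x : Point G}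
    (hx : base g hg 0 ≤ x) : action G k x = x := by
  induction x using Antisymmetrization.ind
  have h := PrePoint.smul_antisymmRel_of_base_le hgk hx
  exact le_antisymm h.le h.ge

theorem lt_action_base {g : G} (hg : 1 < g) (q : ℚ) :
    base g hg.ne' q < action G g (base g hg.ne' q) :=
  PrePoint.lt_smul_of_one_lt hg .rfl

theorem action_injective : Injective (action G) := by
  refine (injective_iff_map_eq_one _).2 fun g hg => by_contra fun hne => ?_
  have hmoves : ∀ k : G, 1 < k → action G k ≠ 1 := fun k hk h1 =>
    (lt_action_base hk 0).ne (by rw [h1]; rfl)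
  rcases lt_or_gt_of_ne hne with hlt | hgt
  · exact hmoves g⁻¹ (one_lt_inv'.2 hlt) (by rw [map_inv, hg, inv_one])
  · exact hmoves g hgt hg

end Point

end

theorem eq_self_of_monotone_of_forall_ratCast {f : ℝ → ℝ} (hf : Monotone f)
    (h : ∀ q : ℚ, f q = q) (x : ℝ) : f x = x := by
  apply le_antisymm
  · refine le_of_forall_gt fun z hxz => ?_
    obtain ⟨q, hxq, hqz⟩ := exists_rat_btwn hxz
    exact (hf hxq.le).trans_lt ((h q).trans_lt hqz)
  · refine le_of_forall_lt fun z hzx => ?_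
    obtain ⟨q, hzq, hqx⟩ := exists_rat_btwn hzx
    exact hzq.trans_le ((h q).ge.trans (hf hqx.le))

namespace OrderIso

noncomputable def extendRealFun (φ : ℚ ≃o ℚ) (x : ℝ) : ℝ :=
  sSup ((fun q : ℚ => (φ q : ℝ)) '' {q : ℚ | (q : ℝ) ≤ x})

theorem extendRealFun_ratCast (φ : ℚ ≃o ℚ) (q : ℚ) : extendRealFun φ q = φ q := by
  refine IsGreatest.csSup_eq ⟨⟨q, le_refl (q : ℝ), rfl⟩, ?_⟩
  rintro _ ⟨p, hp : (p : ℝ) ≤ q, rfl⟩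
  exact Rat.cast_le.2 (φ.monotone (Rat.cast_le.1 hp))

theorem monotone_extendRealFun (φ : ℚ ≃o ℚ) : Monotone (extendRealFun φ) := by
  intro x y hxy
  obtain ⟨p, hpx⟩ := exists_rat_lt x
  obtain ⟨r, hyr⟩ := exists_rat_gt y
  refine csSup_le_csSup ⟨φ r, ?_⟩ ⟨φ p, p, hpx.le, rfl⟩ (image_mono fun q hq => le_trans hq hxy)
  rintro _ ⟨q, hq, rfl⟩
  exact Rat.cast_le.2 (φ.monotone (Rat.cast_le.1 (hq.trans hyr.le)))

noncomputable def extendReal (φ : ℚ ≃o ℚ) : ℝ ≃o ℝ :=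
  Equiv.toOrderIso
    { toFun := extendRealFun φ
      invFun := extendRealFun φ.symm
      left_inv := eq_self_of_monotone_of_forall_ratCast
        ((monotone_extendRealFun _).comp (monotone_extendRealFun _))
        fun q => by simp [extendRealFun_ratCast]
      right_inv := eq_self_of_monotone_of_forall_ratCast
        ((monotone_extendRealFun _).comp (monotone_extendRealFun _))
        fun q => by simp [extendRealFun_ratCast] }
    (monotone_extendRealFun φ) (monotone_extendRealFun φ.symm)

@[simp]
theorem extendReal_ratCast (φ : ℚ ≃o ℚ) (q : ℚ) : extendReal φ q = φ q :=
  extendRealFun_ratCast φ q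

theorem ext_ratCast {e₁ e₂ : ℝ ≃o ℝ} (h : ∀ q : ℚ, e₁ q = e₂ q) : e₁ = e₂ :=
  DFunLike.coe_injective <| e₁.continuous.ext_on Rat.denseRange_cast e₂.continuous <| by
    rintro _ ⟨q, rfl⟩
    exact h q

noncomputable def extendRealHom : (ℚ ≃o ℚ) →* (ℝ ≃o ℝ) where
  toFun := extendReal
  map_one' := ext_ratCast fun q => by simp [RelIso.one_apply]
  map_mul' φ ψ := ext_ratCast fun q => by simp [RelIso.mul_apply]

def autCongr {α β : Type*} [Preorder α] [Preorder β] (e : α ≃o β) : (α ≃o α) ≃* (β ≃o β) where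
  toFun f := e.symm.trans (f.trans e)
  invFun f := e.trans (f.trans e.symm)
  left_inv f := by ext; simp
  right_inv f := by ext; simp
  map_mul' f g := by ext; simp [RelIso.mul_apply]

end OrderIso

theorem exists_real_semiconj {G α : Type*} [Group G] [LinearOrder α] [Countable α]
    [DenselyOrdered α] [NoMinOrder α] [NoMaxOrder α] [Nonempty α] (A : G →* (α ≃o α)) :
    ∃ (ρ : G →* (ℝ ≃o ℝ)) (ι : α → ℝ), StrictMono ι ∧ DenseRange ι ∧
      ∀ g a, ρ g (ι a) = ι (A g a) := by
  obtain ⟨Θ⟩ := Order.iso_of_countable_dense α ℚ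
  refine ⟨OrderIso.extendRealHom.comp (Θ.autCongr.toMonoidHom.comp A), fun a => Θ a,
    Rat.cast_strictMono.comp Θ.strictMono,
    Rat.denseRange_cast.comp Θ.surjective.denseRange Rat.continuous_coe_real, fun g a => ?_⟩
  simp [OrderIso.extendRealHom, OrderIso.autCongr]

theorem injective_of_semiconj {G α β : Type*} [Group G] [Preorder α] [Preorder β] {ι : α → β}
    (hι : Injective ι) {A : G →* (α ≃o α)} {ρ : G →* (β ≃o β)}
    (h : ∀ g a, ρ g (ι a) = ι (A g a)) (hA : Injective A) : Injective ρ := by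
  refine (injective_iff_map_eq_one ρ).2 fun g hg => (injective_iff_map_eq_one A).1 hA g ?_
  ext a
  exact hι (by rw [← h, hg]; rfl)

theorem DenseRange.Ioi_subset_of_isClosed {α β : Type*} [LinearOrder α] [LinearOrder β]
    [TopologicalSpace β] [OrderClosedTopology β] {ι : α → β} (hd : DenseRange ι)
    (hι : StrictMono ι) {P : Set β} (hP : IsClosed P) {b : α} (h : ∀ a, b < a → ι a ∈ P) :
    Ioi (ι b) ⊆ P :=
  (hd.open_subset_closure_inter isOpen_Ioi).trans <|
    closure_minimal (by rintro _ ⟨hx, a, rfl⟩; exact h a (hι.lt_iff_lt.1 hx)) hP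

theorem realSup_lt_realSup {s t : Set ℝ} {c d : ℝ} (hs : ∀ x ∈ s, x ≤ c) (hcd : c < d)
    (hd : d ∈ t) : realSup s < realSup t :=
  calc realSup s ≤ c := sSup_le (by rintro _ ⟨x, hx, rfl⟩; exact EReal.coe_le_coe_iff.2 (hs x hx))
    _ < d := EReal.coe_lt_coe_iff.2 hcd
    _ ≤ realSup t := le_sSup ⟨d, hd, rfl⟩

section Semiconj

variable {α : Type*} [LinearOrder α] {ι : α → ℝ} (hι : StrictMono ι) (hd : DenseRange ι)
  {b₀ b₁ : α} (hb : b₀ < b₁)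
include hι hd hb

theorem realSup_lt_of_semiconj_of_le_self {f : ℝ ≃o ℝ} {F : α → α} (hF : ∀ a, f (ι a) = ι (F a))
    (hup : ∀ a, b₀ < a → a ≤ F a) (hmove : b₁ < F b₁) :
    realSup {x | f x < x} < realSup {x | x < f x} := by
  refine realSup_lt_realSup (fun x hx => le_of_not_gt fun hx₀ => ?_) (hι hb)
    (show ι b₁ < f (ι b₁) by rw [hF]; exact hι hmove)
  exact (show f x < x from hx).not_ge <| hd.Ioi_subset_of_isClosed hι
    (isClosed_le continuous_id f.continuous)
    (fun a ha => show ι a ≤ f (ι a) by rw [hF]; exact hι.monotone (hup a ha)) hx₀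

theorem realSup_lt_of_semiconj_of_eq_self {f f' : ℝ ≃o ℝ} {F F' : α → α}
    (hF : ∀ a, f (ι a) = ι (F a)) (hF' : ∀ a, f' (ι a) = ι (F' a))
    (hfix : ∀ a, b₀ < a → F' a = a) (hmove : F b₁ ≠ b₁) :
    realSup {x | f' x ≠ x} < realSup {x | f x ≠ x} := by
  refine realSup_lt_realSup (fun x hx => le_of_not_gt fun hx₀ => ?_) (hι hb)
    (show f (ι b₁) ≠ ι b₁ by rw [hF]; exact hι.injective.ne hmove)
  exact hx (hd.Ioi_subset_of_isClosed hι (isClosed_eq f'.continuous continuous_id)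
    (fun a ha => show f' (ι a) = ι a by rw [hF', hfix a ha]) hx₀)

end Semiconj

theorem exists_dynamicalRealization {G : Type*} [Group G] [LinearOrder G] [MulLeftMono G]
    [MulRightMono G] [Countable G] [Nontrivial G] :
    ∃ ρ : G →* (ℝ ≃o ℝ), Injective ρ ∧
      (∀ g : G, 1 < g → realSup {x | ρ g x < x} < realSup {x | x < ρ g x}) ∧
      (∀ g h : G, (∀ n : ℤ, h ^ n < g) → realSup {x | ρ h x ≠ x} < realSup {x | ρ g x ≠ x}) := by
  obtain ⟨g₀, hg₀⟩ := exists_ne (1 : G)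
  have : Nonempty (Point G) := ⟨Point.base g₀ hg₀ 0⟩
  obtain ⟨ρ, ι, hι, hd, hρ⟩ := exists_real_semiconj (Point.action G)
  refine ⟨ρ, injective_of_semiconj hι.injective hρ Point.action_injective, fun g hg => ?_,
    fun g h hgh => ?_⟩
  · exact realSup_lt_of_semiconj_of_le_self hι hd (Point.base_lt_base zero_lt_one) (hρ g)
      (fun _ ha => Point.le_action_of_base_le hg ha.le) (Point.lt_action_base hg 1)
  · have hg : 1 < g := by simpa using hgh 0
    exact realSup_lt_of_semiconj_of_eq_self hι hd (Point.base_lt_base zero_lt_one) (hρ g) (hρ h)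
      (fun _ ha => Point.action_eq_of_base_le (not_archLE_of_forall_zpow_lt hgh) ha.le)
      (Point.lt_action_base hg 1).ne'

noncomputable abbrev IsBiOrder.linearOrder {G : Type*} [Group G] {r : G → G → Prop}
    (hr : IsBiOrder r) : LinearOrder G :=
  haveI : IsStrictTotalOrder G r :=
    { irrefl := hr.irrefl
      trans := hr.trans
      trichotomous := fun a b hab hba => by_contra fun hne => (hr.total a b hne).elim hab hba }
  letI := Classical.decRel r
  linearOrderOfSTO r

/-- Every countable bi-ordered group admits a faithful action on the real line by
orientation-preserving homeomorphisms (elements of `ℝ ≃o ℝ`), such that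
(i) for `1 < g`, `sup {x | g x > x} > sup {x | g x < x}` (suprema in `[-∞,+∞]`), and
(ii) if `g ≫ h` (i.e. `hⁿ < g` for all `n : ℤ`) then
`sup {x | g x ≠ x} > sup {x | h x ≠ x}`. -/
theorem countable_biordered_dynamical_realization
    {G : Type*} [Group G] [Countable G] (r : G → G → Prop) (hr : IsBiOrder r) :
    ∃ ρ : G →* (ℝ ≃o ℝ), Function.Injective ρ ∧
      (∀ g : G, r 1 g → realSup {x | ρ g x < x} < realSup {x | x < ρ g x}) ∧
      (∀ g h : G, (∀ n : ℤ, r (h ^ n) g) →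
        realSup {x | ρ h x ≠ x} < realSup {x | ρ g x ≠ x}) := by
  let := hr.linearOrder
  have : MulLeftStrictMono G := ⟨fun c _ _ h => hr.mul_left _ _ c h⟩
  have : MulRightStrictMono G := ⟨fun c _ _ h => hr.mul_right _ _ c h⟩
  have := mulLeftMono_of_mulLeftStrictMono G
  have := mulRightMono_of_mulRightStrictMono G
  rcases subsingleton_or_nontrivial G with hG | hG
  · refine ⟨1, injective_of_subsingleton _, fun g hg => ?_, fun g h hgh => ?_⟩
    · exact (hr.irrefl 1 (Subsingleton.elim g 1 ▸ hg)).elim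
    · exact (hr.irrefl 1 (by simpa [Subsingleton.elim g 1] using hgh 0)).elim
  · exact exists_dynamicalRealization
end

section
/- If dynamical realizations ρ_G and ρ_H of countable bi-ordered groups (G, <_G) and (H, <_H) merge, then the sets of critical points are disjoint: T_G ∩ T_H = ∅. -/
section DynamicalRealization

variable {G H : Type*} [Group G] [Group H]

/-- `ρ` is a dynamical realization of the bi-ordered group `(G, r)`:
a faithful action on `ℝ` by orientation-preserving homeomorphisms satisfying
(i) for `1 < g`, `sup {x | g x > x} > sup {x | g x < x}`;
(ii) if `hⁿ < g` for all `n : ℤ` then `sup {x | g x ≠ x} > sup {x | h x ≠ x}`;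
(iii) for `g ≠ 1` the critical point `t_g = sup {x | g x ≠ x}` is a real number;
(iv) for `g ≠ 1`, `ρ g` is not the identity on any nonempty open interval `(a, b)`
with `b < t_g`. -/
structure IsDynamicalRealization (r : G → G → Prop) (ρ : G →* (ℝ ≃o ℝ)) : Prop where
  inj : Function.Injective ρ
  pos_cond : ∀ g : G, r 1 g → realSup {x | ρ g x < x} < realSup {x | x < ρ g x}
  dom_cond : ∀ g h : G, (∀ n : ℤ, r (h ^ n) g) →
    realSup {x | ρ h x ≠ x} < realSup {x | ρ g x ≠ x}
  crit_real : ∀ g : G, g ≠ 1 → ∃ t : ℝ, realSup {x | ρ g x ≠ x} = (t : EReal)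
  no_local_id : ∀ g : G, g ≠ 1 → ∀ a b : ℝ, a < b →
    (b : EReal) < realSup {x | ρ g x ≠ x} → ∃ x : ℝ, a < x ∧ x < b ∧ ρ g x ≠ x

/-- The set `T_G` of critical points `t_g = sup {x | ρ g x ≠ x}`, `g ≠ 1`. -/
def critSet (ρ : G →* (ℝ ≃o ℝ)) : Set ℝ :=
  {t : ℝ | ∃ g : G, g ≠ 1 ∧ realSup {x | ρ g x ≠ x} = (t : EReal)}

/-- A letter (an element of `G` or of `H`) regarded as an element of the free product. -/
def letterEmb : G ⊕ H → Monoid.Coprod G H :=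
  Sum.elim (fun g => Monoid.Coprod.inl g) (fun h => Monoid.Coprod.inr h)

/-- `w = [f₁, f₂, …, fₙ]` is a normal form word: every letter is a nontrivial element of
its factor, and consecutive letters lie in different factors. -/
def IsNormalWord (w : List (G ⊕ H)) : Prop :=
  (∀ l ∈ w, Sum.elim (fun g : G => g ≠ 1) (fun h : H => h ≠ 1) l) ∧
    w.Chain' (fun a b => a.isLeft ≠ b.isLeft)

/-- The element `fₙ ⋯ f₂ f₁` of the free product represented by the word
`w = [f₁, f₂, …, fₙ]` (the letter `f₁` acts first). -/
def wordProd (w : List (G ⊕ H)) : Monoid.Coprod G H :=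
  ((w.map letterEmb).reverse).prod

/-- The word `w = [f₁, …, fₙ]` is `x`-reduced with respect to the action `ρF`:
for every `k`, `t_{f_k} ≥ ρF (f_{k-1} ⋯ f₁) x`. -/
def XReduced (ρF : Monoid.Coprod G H →* (ℝ ≃o ℝ)) (x : ℝ) (w : List (G ⊕ H)) : Prop :=
  ∀ (k : ℕ) (hk : k < w.length),
    ((ρF (wordProd (w.take k)) x : ℝ) : EReal) ≤
      realSup {y | ρF (letterEmb (w.get ⟨k, hk⟩)) y ≠ y}

/-- The realizations `ρG` and `ρH` merge: for every `x ∈ T_G ∪ T_H` and every `x`-reduced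
normal word `w` over `G ∗ H` whose product fixes `x`, either `x ∈ T_G` and the product
lies in the factor `G`, or `x ∈ T_H` and the product lies in the factor `H`. -/
def Merges (ρG : G →* (ℝ ≃o ℝ)) (ρH : H →* (ℝ ≃o ℝ)) : Prop :=
  ∀ x ∈ critSet ρG ∪ critSet ρH, ∀ w : List (G ⊕ H), IsNormalWord w →
    XReduced (Monoid.Coprod.lift ρG ρH) x w →
    (Monoid.Coprod.lift ρG ρH) (wordProd w) x = x →
    (x ∈ critSet ρG ∧ ∃ g : G, wordProd w = Monoid.Coprod.inl g) ∨
    (x ∈ critSet ρH ∧ ∃ h : H, wordProd w = Monoid.Coprod.inr h)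

end DynamicalRealization


/-! A common critical point `x = t_g = t_h` is fixed by both `g` and `h`, since an
orientation-preserving bijection fixing everything to the right of `x` also fixes `x`. Hence the
normal word `h g` is `x`-reduced and fixes `x`, and merging would put `h g` into one of the
factors, which it is not. -/

theorem OrderIso.apply_le_of_forall_lt_apply_eq {α : Type*} [LinearOrder α] [DenselyOrdered α]
    (f : α ≃o α) {x : α} (hfix : ∀ y, x < y → f y = y) : f x ≤ x := by
  by_contra! hx
  obtain ⟨y, hxy, hyf⟩ := exists_between hx
  have := f.strictMono hxy
  rw [hfix y hxy] at this
  exact lt_asymm this hyf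

theorem OrderIso.apply_eq_self_of_forall_lt_apply_eq {α : Type*} [LinearOrder α]
    [DenselyOrdered α] (f : α ≃o α) {x : α} (hfix : ∀ y, x < y → f y = y) : f x = x := by
  have hsymm : f.symm x ≤ x :=
    f.symm.apply_le_of_forall_lt_apply_eq fun y hy => f.symm_apply_eq.mpr (hfix y hy).symm
  exact le_antisymm (f.apply_le_of_forall_lt_apply_eq hfix) (f.symm_apply_le.mp hsymm)

theorem coe_le_realSup {s : Set ℝ} {y : ℝ} (hy : y ∈ s) : (y : EReal) ≤ realSup s :=
  le_sSup ⟨y, hy, rfl⟩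

theorem apply_eq_self_of_realSup_eq (f : ℝ ≃o ℝ) {x : ℝ}
    (hx : realSup {y | f y ≠ y} = (x : EReal)) : f x = x := by
  refine f.apply_eq_self_of_forall_lt_apply_eq fun y hxy => ?_
  by_contra hy
  have := coe_le_realSup (s := {y | f y ≠ y}) hy
  rw [hx, EReal.coe_le_coe_iff] at this
  exact this.not_gt hxy

namespace Monoid.Coprod

variable {M N : Type*} [Monoid M] [Monoid N]

theorem inr_mul_inl_ne_inl {n : N} (hn : n ≠ 1) (m m' : M) :
    (inr n * inl m : M ∗ N) ≠ inl m' := fun h => hn <| by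
  simpa using congrArg snd h

theorem inr_mul_inl_ne_inr {m : M} (hm : m ≠ 1) (n n' : N) :
    (inr n * inl m : M ∗ N) ≠ inr n' := fun h => hm <| by
  simpa using congrArg fst h

end Monoid.Coprod

section Words

variable {G H : Type*} [Group G] [Group H]

theorem wordProd_pair (g : G) (h : H) :
    wordProd [Sum.inl g, Sum.inr h] = Monoid.Coprod.inr h * Monoid.Coprod.inl g := by
  simp [wordProd, letterEmb]

theorem isNormalWord_pair {g : G} {h : H} (hg : g ≠ 1) (hh : h ≠ 1) :
    IsNormalWord [Sum.inl g, Sum.inr h] := by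
  refine ⟨?_, List.isChain_pair.mpr (by simp)⟩
  simp [hg, hh]

theorem xReduced_pair (ρF : Monoid.Coprod G H →* (ℝ ≃o ℝ)) {x : ℝ} (g : G) (h : H)
    (hg : (x : EReal) ≤ realSup {y | ρF (Monoid.Coprod.inl g) y ≠ y})
    (hh : ((ρF (Monoid.Coprod.inl g) x : ℝ) : EReal) ≤
      realSup {y | ρF (Monoid.Coprod.inr h) y ≠ y}) :
    XReduced ρF x [Sum.inl g, Sum.inr h] := by
  intro k hk
  simp only [List.length_cons, List.length_nil] at hk
  interval_cases k
  · simpa [wordProd, letterEmb] using hg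
  · simpa [wordProd, letterEmb] using hh

end Words

theorem merges_critSets_disjoint_general
    {G H : Type*} [Group G] [Group H]
    (ρG : G →* (ℝ ≃o ℝ)) (ρH : H →* (ℝ ≃o ℝ))
    (hm : Merges ρG ρH) :
    critSet ρG ∩ critSet ρH = ∅ := by
  refine Set.eq_empty_of_forall_notMem ?_
  rintro x ⟨⟨g, hg1, hgx⟩, ⟨h, hh1, hhx⟩⟩
  have hg_fix : ρG g x = x := apply_eq_self_of_realSup_eq (ρG g) hgx
  have hh_fix : ρH h x = x := apply_eq_self_of_realSup_eq (ρH h) hhx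
  have hred : XReduced (Monoid.Coprod.lift ρG ρH) x [Sum.inl g, Sum.inr h] :=
    xReduced_pair _ g h (by simp [hgx]) (by simp [hg_fix, hhx])
  have hfix : Monoid.Coprod.lift ρG ρH (wordProd [Sum.inl g, Sum.inr h]) x = x := by
    simp [wordProd_pair, hg_fix, hh_fix]
  rcases hm x (Or.inl ⟨g, hg1, hgx⟩) _ (isNormalWord_pair hg1 hh1) hred hfix with
    ⟨-, g', hg'⟩ | ⟨-, h', hh'⟩
  · exact Monoid.Coprod.inr_mul_inl_ne_inl hh1 g g' (wordProd_pair g h ▸ hg')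
  · exact Monoid.Coprod.inr_mul_inl_ne_inr hg1 h h' (wordProd_pair g h ▸ hh')

/-- If dynamical realizations of countable bi-ordered groups merge, then their sets of
critical points are disjoint. -/
theorem merges_critSets_disjoint
    {G H : Type*} [Group G] [Group H] [Countable G] [Countable H]
    (rG : G → G → Prop) (rH : H → H → Prop)
    (hrG : IsBiOrder rG) (hrH : IsBiOrder rH)
    (ρG : G →* (ℝ ≃o ℝ)) (ρH : H →* (ℝ ≃o ℝ))
    (hG : IsDynamicalRealization rG ρG) (hH : IsDynamicalRealization rH ρH)
    (hm : Merges ρG ρH) :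
    critSet ρG ∩ critSet ρH = ∅ :=
  merges_critSets_disjoint_general ρG ρH hm
end

section
/- If dynamical realizations ρ_G and ρ_H of countable bi-ordered groups (G, <_G) and (H, <_H) merge, then the orbits of the critical-point sets T_G and T_H under the induced action of F = G ∗ H are disjoint: for all f₁, f₂ ∈ F, all g ∈ G \ {1} and all h ∈ H \ {1}, one has ρ_F(f₁)(t_g) ≠ ρ_F(f₂)(t_h). -/
/-!
Suppose `ρ f₁ t_g = ρ f₂ t_h` and put `f = f₂⁻¹ f₁`, so that `f` sends `t_g` to `t_h`. Building `f`
letter by letter, and merging a new letter into the last one or dropping it when it fixes the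
current point, gives a normal `t_g`-reduced word `w` with the same effect on `t_g`. A trailing
letter `a ∈ H` of `w` can be removed by replacing `h` with `a⁻¹ h a`, whose critical point is the
point before `a` acts; so `w` may be assumed to end with a letter of `G` (if `w` is empty, take
`w = g`, which fixes `t_g`). Then `w⁻¹ h w` is a normal `t_g`-reduced word of length at least
two fixing `t_g`, so merging puts it in a factor, contradicting uniqueness of normal forms in
`G ∗ H`.
-/

open Monoid

noncomputable def critPoint (φ : ℝ ≃o ℝ) : EReal := realSup {x | φ x ≠ x}

section CritPoint

variable {φ ψ : ℝ ≃o ℝ} {x t : ℝ}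

theorem realSup_eq_coe_iff {S : Set ℝ} : realSup S = t ↔ IsLUB S t := by
  have hcoe : ∀ b : ℝ, (b : EReal) ∈ upperBounds ((↑) '' S) ↔ b ∈ upperBounds S := by
    simp [upperBounds]
  constructor
  · intro h
    have hlub : IsLUB ((↑) '' S : Set EReal) t := h ▸ isLUB_sSup _
    exact ⟨(hcoe t).1 hlub.1, fun b hb => EReal.coe_le_coe_iff.1 (hlub.2 ((hcoe b).2 hb))⟩
  · intro h
    refine IsLUB.sSup_eq ⟨(hcoe t).2 h.1, fun b hb => ?_⟩
    induction b using EReal.rec with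
    | bot =>
      obtain ⟨y, hy⟩ : S.Nonempty := h.nonempty
      simpa using hb ⟨y, hy, rfl⟩
    | coe b => exact EReal.coe_le_coe_iff.2 (h.2 ((hcoe b).1 hb))
    | top => exact le_top

theorem le_critPoint_of_apply_ne (h : φ x ≠ x) : (x : EReal) ≤ critPoint φ :=
  le_sSup ⟨x, h, rfl⟩

theorem apply_eq_of_not_le_critPoint (h : ¬ (x : EReal) ≤ critPoint φ) : φ x = x :=
  not_not.1 (mt le_critPoint_of_apply_ne h)

/-- The set of moved points is `φ`-invariant. -/
theorem apply_le_critPoint (h : (x : EReal) ≤ critPoint φ) : (φ x : EReal) ≤ critPoint φ := by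
  by_cases hx : φ x = x
  · rwa [hx]
  · exact le_critPoint_of_apply_ne (mt (fun h' => φ.injective h') hx)

theorem critPoint_inv : critPoint φ⁻¹ = critPoint φ := by
  simp only [critPoint, ne_eq]
  congr! 3 with y
  exact not_congr (φ.symm_apply_eq.trans eq_comm)

theorem apply_eq_of_critPoint_eq (h : critPoint φ = t) : φ t = t := by
  have hle : ∀ y, φ y ≠ y → y ≤ t := fun y hy =>
    EReal.coe_le_coe_iff.1 (h ▸ le_critPoint_of_apply_ne hy)
  by_contra hne
  rcases lt_or_gt_of_ne hne with hlt | hgt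
  · -- then `φ⁻¹ t > t` is moved
    have hlt' : t < φ⁻¹ t := by
      rw [← φ.lt_iff_lt, RelIso.apply_inv_self]; exact hlt
    refine (hle _ fun h' => ?_).not_gt hlt'
    rw [RelIso.apply_inv_self] at h'
    exact hlt'.ne h'
  · exact (hle _ fun h' => hne (φ.injective h')).not_gt hgt

theorem critPoint_conj {p s : ℝ} (hs : critPoint ψ = s) (hp : φ p = s) :
    critPoint (φ⁻¹ * ψ * φ) = p := by
  have hset : {y | (φ⁻¹ * ψ * φ) y ≠ y} = φ ⁻¹' {y | ψ y ≠ y} := by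
    ext y
    simp only [Set.mem_ofPred_eq, Set.mem_preimage, RelIso.mul_apply]
    exact not_congr φ.symm_apply_eq
  rw [critPoint, hset, realSup_eq_coe_iff, φ.isLUB_preimage, hp]
  exact realSup_eq_coe_iff.1 hs

end CritPoint

section Words

variable {G H : Type*} [Group G] [Group H]

@[simp] theorem letterEmb_inl (g : G) : letterEmb (.inl g : G ⊕ H) = Coprod.inl g := rfl

@[simp] theorem letterEmb_inr (h : H) : letterEmb (.inr h : G ⊕ H) = Coprod.inr h := rfl

theorem letterEmb_ne_one_iff {a : G ⊕ H} :
    letterEmb a ≠ 1 ↔ Sum.elim (fun g : G => g ≠ 1) (fun h : H => h ≠ 1) a := by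
  cases a <;> simp [map_eq_one_iff _ Coprod.inl_injective,
    map_eq_one_iff _ Coprod.inr_injective]

theorem isNormalWord_iff {w : List (G ⊕ H)} :
    IsNormalWord w ↔ (∀ a ∈ w, letterEmb a ≠ 1) ∧ w.IsChain (fun a b => a.isLeft ≠ b.isLeft) := by
  simp only [letterEmb_ne_one_iff]
  rfl

@[simp] theorem wordProd_nil : wordProd ([] : List (G ⊕ H)) = 1 := rfl

theorem wordProd_append (u v : List (G ⊕ H)) : wordProd (u ++ v) = wordProd v * wordProd u := by
  simp [wordProd]

@[simp] theorem wordProd_singleton (a : G ⊕ H) : wordProd [a] = letterEmb a := by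
  simp [wordProd]

theorem wordProd_cons (a : G ⊕ H) (w : List (G ⊕ H)) :
    wordProd (a :: w) = wordProd w * letterEmb a := by
  simpa using wordProd_append [a] w

theorem isNormalWord_append {u v : List (G ⊕ H)} :
    IsNormalWord (u ++ v) ↔ IsNormalWord u ∧ IsNormalWord v ∧
      ∀ a ∈ u.getLast?, ∀ b ∈ v.head?, a.isLeft ≠ b.isLeft := by
  simp only [isNormalWord_iff, List.forall_mem_append, List.isChain_append]
  tauto

theorem isNormalWord_singleton {a : G ⊕ H} : IsNormalWord [a] ↔ letterEmb a ≠ 1 := by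
  simp [isNormalWord_iff]

def letterInv : G ⊕ H → G ⊕ H := Sum.map (·⁻¹) (·⁻¹)

@[simp] theorem letterEmb_letterInv (a : G ⊕ H) : letterEmb (letterInv a) = (letterEmb a)⁻¹ := by
  cases a <;> simp [letterInv]

@[simp] theorem isLeft_letterInv (a : G ⊕ H) : (letterInv a).isLeft = a.isLeft := by
  simp [letterInv]

def wordInv (w : List (G ⊕ H)) : List (G ⊕ H) := (w.map letterInv).reverse

theorem wordInv_cons (a : G ⊕ H) (w : List (G ⊕ H)) :
    wordInv (a :: w) = wordInv w ++ [letterInv a] := by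
  simp [wordInv]

theorem head?_wordInv (w : List (G ⊕ H)) : (wordInv w).head? = w.getLast?.map letterInv := by
  simp [wordInv, List.getLast?_map]

theorem wordProd_wordInv (w : List (G ⊕ H)) : wordProd (wordInv w) = (wordProd w)⁻¹ := by
  simp [wordProd, wordInv, List.prod_inv_reverse, Function.comp_def]

theorem IsNormalWord.wordInv {w : List (G ⊕ H)} (hw : IsNormalWord w) :
    IsNormalWord (wordInv w) := by
  rw [isNormalWord_iff] at hw ⊢
  refine ⟨fun a ha => ?_, ?_⟩
  · obtain ⟨b, hb, rfl⟩ := List.mem_map.1 (List.mem_reverse.1 ha)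
    simpa using hw.1 b hb
  · simpa [_root_.wordInv, List.isChain_reverse, List.isChain_map, ne_comm] using hw.2

end Words

section NormalForm

universe u v

variable {G : Type u} {H : Type v}

/-- The family `true ↦ G`, `false ↦ H` in a common universe, so that `G ∗ H` maps to its
`Monoid.CoprodI` and inherits the normal form theorem `Monoid.CoprodI.Word.equiv`. -/
def boolFamily (G : Type u) (H : Type v) (b : Bool) : Type (max u v) := cond b (ULift G) (ULift H)

def letterSigma : G ⊕ H → Σ b, boolFamily G H b :=
  Sum.elim (fun g => ⟨true, ULift.up g⟩) (fun h => ⟨false, ULift.up h⟩)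

theorem letterSigma_injective : Function.Injective (letterSigma (G := G) (H := H)) := by
  rintro (g | h) (g' | h') hgh <;> simp_all [letterSigma, boolFamily]

variable [Group G] [Group H]

instance (b : Bool) : Group (boolFamily G H b) := by
  cases b
  · exact inferInstanceAs (Group (ULift H))
  · exact inferInstanceAs (Group (ULift G))

def toCoprodI : Coprod G H →* CoprodI (boolFamily G H) :=
  Coprod.lift ((CoprodI.of (i := true)).comp MulEquiv.ulift.symm.toMonoidHom)
    ((CoprodI.of (i := false)).comp MulEquiv.ulift.symm.toMonoidHom)

theorem toCoprodI_letterEmb (a : G ⊕ H) :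
    toCoprodI (letterEmb a) = CoprodI.of (letterSigma a).2 := by
  cases a with
  | inl g => exact Coprod.lift_apply_inl _ _ g
  | inr h => exact Coprod.lift_apply_inr _ _ h

def IsNormalWord.toWord {w : List (G ⊕ H)} (hw : IsNormalWord w) :
    CoprodI.Word (boolFamily G H) where
  toList := (w.map letterSigma).reverse
  ne_one := by
    intro l hl
    obtain ⟨a, ha, rfl⟩ := List.mem_map.1 (List.mem_reverse.1 hl)
    cases a <;> exact fun h => hw.1 _ ha (congrArg ULift.down h)
  chain_ne := by
    have := (isNormalWord_iff.1 hw).2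
    rw [List.isChain_reverse, List.isChain_map]
    refine this.imp fun a b hab => ?_
    cases a <;> cases b <;> simp_all [letterSigma]

theorem toCoprodI_wordProd {w : List (G ⊕ H)} (hw : IsNormalWord w) :
    toCoprodI (wordProd w) = hw.toWord.prod := by
  simp [wordProd, CoprodI.Word.prod, IsNormalWord.toWord, map_list_prod, toCoprodI_letterEmb,
    Function.comp_def]

theorem IsNormalWord.wordProd_injective {u v : List (G ⊕ H)} (hu : IsNormalWord u)
    (hv : IsNormalWord v) (h : wordProd u = wordProd v) : u = v := by
  classical
  have hword : hu.toWord = hv.toWord :=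
    CoprodI.Word.equiv.symm.injective (by
      simp only [CoprodI.Word.equiv, Equiv.coe_fn_symm_mk, ← toCoprodI_wordProd, h])
  have hlist := congrArg CoprodI.Word.toList hword
  simp only [IsNormalWord.toWord, List.reverse_inj] at hlist
  exact (List.map_injective_iff.2 letterSigma_injective) hlist

theorem IsNormalWord.length_le_one_of_wordProd_eq_letterEmb {w : List (G ⊕ H)}
    (hw : IsNormalWord w) {a : G ⊕ H} (h : wordProd w = letterEmb a) : w.length ≤ 1 := by
  by_cases ha : letterEmb a = 1
  · have hnil : IsNormalWord ([] : List (G ⊕ H)) := by simp [isNormalWord_iff]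
    simp [hw.wordProd_injective hnil (by simpa [ha] using h)]
  · simp [hw.wordProd_injective (isNormalWord_singleton.2 ha) (by simpa using h)]

end NormalForm

section ReducedWords

variable {G H : Type*} [Group G] [Group H] (ρ : Coprod G H →* (ℝ ≃o ℝ))

/-- A recursive form of `XReduced`. -/
def IsReducedWord (x : ℝ) : List (G ⊕ H) → Prop
  | [] => True
  | a :: w => (x : EReal) ≤ critPoint (ρ (letterEmb a)) ∧ IsReducedWord (ρ (letterEmb a) x) w

def ReducedReachable (x y : ℝ) : Prop :=
  ∃ w : List (G ⊕ H), IsNormalWord w ∧ IsReducedWord ρ x w ∧ ρ (wordProd w) x = y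

variable {ρ}

theorem apply_wordProd_cons (a : G ⊕ H) (w : List (G ⊕ H)) (x : ℝ) :
    ρ (wordProd (a :: w)) x = ρ (wordProd w) (ρ (letterEmb a) x) := by
  rw [wordProd_cons, map_mul, RelIso.mul_apply]

theorem apply_wordProd_append (u v : List (G ⊕ H)) (x : ℝ) :
    ρ (wordProd (u ++ v)) x = ρ (wordProd v) (ρ (wordProd u) x) := by
  rw [wordProd_append, map_mul, RelIso.mul_apply]

theorem isReducedWord_append {u v : List (G ⊕ H)} {x : ℝ} :
    IsReducedWord ρ x (u ++ v) ↔ IsReducedWord ρ x u ∧ IsReducedWord ρ (ρ (wordProd u) x) v := by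
  induction u generalizing x with
  | nil => simp [IsReducedWord]
  | cons a u ih =>
    rw [List.cons_append, IsReducedWord, IsReducedWord, ih, apply_wordProd_cons, and_assoc]

theorem isReducedWord_singleton {a : G ⊕ H} {x : ℝ} :
    IsReducedWord ρ x [a] ↔ (x : EReal) ≤ critPoint (ρ (letterEmb a)) := by
  simp [IsReducedWord]

theorem IsReducedWord.xReduced {w : List (G ⊕ H)} {x : ℝ} (hw : IsReducedWord ρ x w) :
    XReduced ρ x w := by
  induction w generalizing x with
  | nil => exact fun k hk => absurd hk (Nat.not_lt_zero k)
  | cons a w ih =>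
    rintro (_ | k) hk
    · simpa [critPoint] using hw.1
    · simpa [apply_wordProd_cons] using ih hw.2 k (by simpa using hk)

theorem IsReducedWord.wordInv {w : List (G ⊕ H)} {x : ℝ} (hw : IsReducedWord ρ x w) :
    IsReducedWord ρ (ρ (wordProd w) x) (wordInv w) := by
  induction w generalizing x with
  | nil => trivial
  | cons a w ih =>
    rw [wordInv_cons, isReducedWord_append, apply_wordProd_cons, wordProd_wordInv, map_inv,
      RelIso.inv_apply_self, isReducedWord_singleton, letterEmb_letterInv, map_inv, critPoint_inv]
    exact ⟨ih hw.2, apply_le_critPoint hw.1⟩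

theorem apply_wordProd_wordInv (w : List (G ⊕ H)) (x : ℝ) :
    ρ (wordProd (wordInv w)) (ρ (wordProd w) x) = x := by
  rw [wordProd_wordInv, map_inv, RelIso.inv_apply_self]

end ReducedWords

section Reachability

variable {G H : Type*} [Group G] [Group H] {ρ : Coprod G H →* (ℝ ≃o ℝ)}

theorem exists_letterEmb_eq_mul {a b : G ⊕ H} (h : a.isLeft = b.isLeft) :
    ∃ c : G ⊕ H, c.isLeft = a.isLeft ∧ letterEmb c = letterEmb b * letterEmb a := by
  rcases a with a | a <;> rcases b with b | b
  · exact ⟨.inl (b * a), rfl, by simp⟩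
  · simp at h
  · simp at h
  · exact ⟨.inr (b * a), rfl, by simp⟩

theorem reducedReachable_concat_of_isLeft_ne {w : List (G ⊕ H)} {x : ℝ} {a : G ⊕ H}
    (hw : IsNormalWord w) (hr : IsReducedWord ρ x w)
    (hlast : ∀ b ∈ w.getLast?, b.isLeft ≠ a.isLeft) :
    ReducedReachable ρ x (ρ (letterEmb a) (ρ (wordProd w) x)) := by
  by_cases ha : letterEmb a ≠ 1 ∧ ((ρ (wordProd w) x : ℝ) : EReal) ≤ critPoint (ρ (letterEmb a))
  · refine ⟨w ++ [a],
      isNormalWord_append.2 ⟨hw, isNormalWord_singleton.2 ha.1, by simpa using hlast⟩,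
      isReducedWord_append.2 ⟨hr, isReducedWord_singleton.2 ha.2⟩, ?_⟩
    simp [apply_wordProd_append]
  · refine ⟨w, hw, hr, ?_⟩
    rcases not_and_or.1 ha with ha | ha
    · rw [not_not.1 ha, map_one, RelIso.one_apply]
    · exact (apply_eq_of_not_le_critPoint ha).symm

theorem ReducedReachable.apply_letterEmb {x y : ℝ} (h : ReducedReachable ρ x y) (a : G ⊕ H) :
    ReducedReachable ρ x (ρ (letterEmb a) y) := by
  obtain ⟨w, hw, hr, rfl⟩ := h
  rcases w.eq_nil_or_concat' with rfl | ⟨u, b, rfl⟩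
  · exact reducedReachable_concat_of_isLeft_ne hw hr (by simp)
  obtain ⟨hu, -, hub⟩ := isNormalWord_append.1 hw
  by_cases hba : b.isLeft = a.isLeft
  · -- absorb `a` into the last letter `b`
    obtain ⟨c, hc, hcab⟩ := exists_letterEmb_eq_mul hba
    have := reducedReachable_concat_of_isLeft_ne (a := c) hu (isReducedWord_append.1 hr).1
      (by simpa [hc] using hub)
    simpa [hcab, apply_wordProd_append, RelIso.mul_apply] using this
  · exact reducedReachable_concat_of_isLeft_ne hw hr (by simpa using hba)

theorem reducedReachable_apply (f : Coprod G H) (x : ℝ) : ReducedReachable ρ x (ρ f x) := by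
  induction f using Coprod.induction_on' with
  | one => exact ⟨[], by simp [isNormalWord_iff], trivial, rfl⟩
  | inl_mul g f ih => simpa [RelIso.mul_apply] using ih.apply_letterEmb (.inl g)
  | inr_mul h f ih => simpa [RelIso.mul_apply] using ih.apply_letterEmb (.inr h)

end Reachability

section Construction

variable {G H : Type*} [Group G] [Group H] {ρ : Coprod G H →* (ℝ ≃o ℝ)}

theorem exists_reducedWord_getLast_inl {g : G} {h : H} {t : ℝ} (hg : g ≠ 1)
    (hgt : critPoint (ρ (Coprod.inl g)) = t) (hh : h ≠ 1) {w : List (G ⊕ H)}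
    (hw : IsNormalWord w) (hr : IsReducedWord ρ t w)
    (hht : critPoint (ρ (Coprod.inr h)) = ρ (wordProd w) t) :
    ∃ (v : List (G ⊕ H)) (g' : G) (h' : H), IsNormalWord v ∧ IsReducedWord ρ t v ∧
      v.getLast? = some (.inl g') ∧ h' ≠ 1 ∧
      critPoint (ρ (Coprod.inr h')) = ρ (wordProd v) t := by
  induction w using List.reverseRecOn generalizing h with
  | nil =>
    refine ⟨[.inl g], g, h, isNormalWord_singleton.2 (letterEmb_ne_one_iff.2 hg),
      isReducedWord_singleton.2 (by simp [hgt]), rfl, hh, ?_⟩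
    simpa [apply_eq_of_critPoint_eq hgt] using hht
  | append_singleton u a ih =>
    rcases a with g' | a
    · exact ⟨_, g', h, hw, hr, List.getLast?_concat .., hh, hht⟩
    · refine ih (h := a⁻¹ * h * a) (by simpa using (conj_eq_one_iff (a := a⁻¹)).not.2 hh)
        (isNormalWord_append.1 hw).1 (isReducedWord_append.1 hr).1 ?_
      simp only [map_mul, map_inv]
      exact critPoint_conj hht (by simp [apply_wordProd_append])

theorem exists_long_reducedWord_fixing {f : Coprod G H} {g : G} {h : H} {t s : ℝ}
    (hg : g ≠ 1) (hh : h ≠ 1) (ht : critPoint (ρ (Coprod.inl g)) = t)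
    (hs : critPoint (ρ (Coprod.inr h)) = s) (hf : ρ f t = s) :
    ∃ W : List (G ⊕ H), IsNormalWord W ∧ 2 ≤ W.length ∧ IsReducedWord ρ t W ∧
      ρ (wordProd W) t = t := by
  obtain ⟨w, hw, hr, hwf⟩ := reducedReachable_apply (ρ := ρ) f t
  obtain ⟨v, g', h', hv, hvr, hlast, hh', hcrit⟩ :=
    exists_reducedWord_getLast_inl hg ht hh hw hr (by rw [hwf, hf, hs])
  have hfix : ρ (Coprod.inr h') (ρ (wordProd v) t) = ρ (wordProd v) t :=
    apply_eq_of_critPoint_eq hcrit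
  refine ⟨v ++ .inr h' :: wordInv v, ?_, ?_, ?_, ?_⟩
  · rw [← List.singleton_append]
    refine isNormalWord_append.2 ⟨hv, isNormalWord_append.2
      ⟨isNormalWord_singleton.2 (letterEmb_ne_one_iff.2 hh'), hv.wordInv, ?_⟩, by simp [hlast]⟩
    simp [head?_wordInv, hlast, letterInv]
  · have hv0 : 0 < v.length := List.length_pos_of_ne_nil (by rintro rfl; simp at hlast)
    simp only [List.length_append, List.length_cons]
    omega
  · refine isReducedWord_append.2 ⟨hvr, hcrit.ge, ?_⟩
    simpa [hfix] using hvr.wordInv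
  · simp [apply_wordProd_append, apply_wordProd_cons, hfix, apply_wordProd_wordInv]

end Construction

theorem merges_orbits_of_critSets_disjoint_general
    {G H : Type*} [Group G] [Group H]
    (ρG : G →* (ℝ ≃o ℝ)) (ρH : H →* (ℝ ≃o ℝ))
    (hm : Merges ρG ρH) :
    ∀ (f₁ f₂ : Monoid.Coprod G H) (g : G) (h : H), g ≠ 1 → h ≠ 1 →
      ∀ t s : ℝ, realSup {x | ρG g x ≠ x} = (t : EReal) →
        realSup {x | ρH h x ≠ x} = (s : EReal) →
        (Monoid.Coprod.lift ρG ρH) f₁ t ≠ (Monoid.Coprod.lift ρG ρH) f₂ s := by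
  intro f₁ f₂ g h hg hh t s ht hs heq
  set ρ := Monoid.Coprod.lift ρG ρH
  have hf : ρ (f₂⁻¹ * f₁) t = s := by
    rw [map_mul, map_inv, RelIso.mul_apply, heq, RelIso.inv_apply_self]
  obtain ⟨W, hWn, hWlen, hWr, hWfix⟩ := exists_long_reducedWord_fixing (ρ := ρ) hg hh
    (by simpa [ρ, critPoint] using ht) (by simpa [ρ, critPoint] using hs) hf
  rcases hm t (Or.inl ⟨g, hg, ht⟩) W hWn hWr.xReduced hWfix with ⟨-, g', hW⟩ | ⟨-, h', hW⟩
  · have := hWn.length_le_one_of_wordProd_eq_letterEmb (a := .inl g') hW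
    omega
  · have := hWn.length_le_one_of_wordProd_eq_letterEmb (a := .inr h') hW
    omega

/-- If dynamical realizations of countable bi-ordered groups merge, then the orbits of the
critical-point sets `T_G` and `T_H` under the induced action of `G ∗ H` are disjoint. -/
theorem merges_orbits_of_critSets_disjoint
    {G H : Type*} [Group G] [Group H] [Countable G] [Countable H]
    (rG : G → G → Prop) (rH : H → H → Prop)
    (hrG : IsBiOrder rG) (hrH : IsBiOrder rH)
    (ρG : G →* (ℝ ≃o ℝ)) (ρH : H →* (ℝ ≃o ℝ))
    (hG : IsDynamicalRealization rG ρG) (hH : IsDynamicalRealization rH ρH)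
    (hm : Merges ρG ρH) :
    ∀ (f₁ f₂ : Monoid.Coprod G H) (g : G) (h : H), g ≠ 1 → h ≠ 1 →
      ∀ t s : ℝ, realSup {x | ρG g x ≠ x} = (t : EReal) →
        realSup {x | ρH h x ≠ x} = (s : EReal) →
        (Monoid.Coprod.lift ρG ρH) f₁ t ≠ (Monoid.Coprod.lift ρG ρH) f₂ s :=
  merges_orbits_of_critSets_disjoint_general ρG ρH hm
end

section
/- (Conrad) Let < be a bi-order on a group G and let C < D be a convex jump. Then there exists a group homomorphism φ : D → (ℝ, +) such that ker φ = C and φ(g) > 0 for every g ∈ D with 1 < g and g ∉ C. -/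
/-- A subgroup `C` is convex with respect to the order `r`: if `a ≤ g ≤ b`
with `a, b ∈ C`, then `g ∈ C`. -/
def IsConvexSubgroup {G : Type*} [Group G] (r : G → G → Prop) (C : Subgroup G) : Prop :=
  ∀ a b g : G, a ∈ C → b ∈ C → (r a g ∨ a = g) → (r g b ∨ g = b) → g ∈ C

/-- `C ⊊ D` is a convex jump: both are convex and no convex subgroup lies strictly
between them. -/
def IsConvexJump {G : Type*} [Group G] (r : G → G → Prop) (C D : Subgroup G) : Prop :=
  IsConvexSubgroup r C ∧ IsConvexSubgroup r D ∧ C < D ∧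
    ∀ E : Subgroup G, IsConvexSubgroup r E → C < E → ¬ E < D

section BiOrdered

variable {G : Type*} [Group G] [LinearOrder G]

theorem Subgroup.lt_of_ordConnected {N : Subgroup G} (hN : (N : Set G).OrdConnected) {p c : G}
    (hp : 1 ≤ p) (hpN : p ∉ N) (hc : c ∈ N) : c < p :=
  lt_of_not_ge fun hpc => hpN (hN.out N.one_mem hc ⟨hp, hpc⟩)

variable [MulLeftMono G] [MulRightMono G]

theorem Subgroup.inv_lt_of_ordConnected {N : Subgroup G} (hN : (N : Set G).OrdConnected) {p c : G}
    (hp : 1 ≤ p) (hpN : p ∉ N) (hc : c ∈ N) : p⁻¹ < c :=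
  inv_lt'.2 (Subgroup.lt_of_ordConnected hN hp hpN (inv_mem hc))

theorem Subgroup.le_total_of_ordConnected {H K : Subgroup G} (hH : (H : Set G).OrdConnected)
    (hK : (K : Set G).OrdConnected) : H ≤ K ∨ K ≤ H := by
  by_contra! h
  obtain ⟨⟨x, hxH, hxK⟩, ⟨y, hyK, hyH⟩⟩ :=
    And.imp SetLike.not_le_iff_exists.1 SetLike.not_le_iff_exists.1 h
  rw [← mabs_mem_iff] at hxH hxK hyK hyH
  rcases le_total |x|ₘ |y|ₘ with hxy | hyx
  · exact hxK (hK.out K.one_mem hyK ⟨one_le_mabs x, hxy⟩)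
  · exact hyH (hH.out H.one_mem hxH ⟨one_le_mabs y, hyx⟩)

theorem Subgroup.normal_of_ordConnected_of_maximal {N : Subgroup G}
    (hN : (N : Set G).OrdConnected) (hNtop : N ≠ ⊤)
    (hmax : ∀ E : Subgroup G, (E : Set G).OrdConnected → N < E → E = ⊤) : N.Normal := by
  refine ⟨fun n hn g => ?_⟩
  set E := N.comap (MulAut.conj g⁻¹).toMonoidHom
  have hmemE : ∀ x, x ∈ E ↔ g⁻¹ * x * g ∈ N := fun x => by simp [E]
  have hE : (E : Set G).OrdConnected :=
    hN.preimage_mono fun a b h => by simpa using mul_le_mul_left (mul_le_mul_right h g⁻¹) g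
  by_contra hgn
  have hEN : ¬ E ≤ N := fun hEN => hgn (hEN ((hmemE _).2 (by simpa [mul_assoc] using hn)))
  have hNE : N < E :=
    lt_of_le_not_ge ((Subgroup.le_total_of_ordConnected hN hE).resolve_right hEN) hEN
  refine hNtop (eq_top_iff.2 fun x _ => ?_)
  simpa [mul_assoc] using (hmemE (g * x * g⁻¹)).1 (hmax E hE hNE ▸ Subgroup.mem_top _)

def Subgroup.boundedByPowers (p : G) : Subgroup G where
  carrier := {g | ∃ n : ℕ, (p ^ n)⁻¹ ≤ g ∧ g ≤ p ^ n}
  one_mem' := ⟨0, by simp⟩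
  mul_mem' := by
    rintro a b ⟨n, han, han'⟩ ⟨m, hbm, hbm'⟩
    refine ⟨n + m, ?_, ?_⟩
    · rw [pow_add, pow_mul_comm, mul_inv_rev]
      exact mul_le_mul' han hbm
    · rw [pow_add]
      exact mul_le_mul' han' hbm'
  inv_mem' := by
    rintro a ⟨n, han, han'⟩
    exact ⟨n, inv_le_inv_iff.2 han', inv_le'.1 han⟩

theorem Subgroup.ordConnected_boundedByPowers {p : G} (hp : 1 ≤ p) :
    (Subgroup.boundedByPowers p : Set G).OrdConnected := by
  refine ⟨fun a ⟨n, han, _⟩ b ⟨m, _, hbm'⟩ g hg => ⟨max n m, ?_, ?_⟩⟩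
  · exact (inv_le_inv_iff.2 (pow_le_pow_right' hp (le_max_left n m))).trans (han.trans hg.1)
  · exact hg.2.trans (hbm'.trans (pow_le_pow_right' hp (le_max_right n m)))

theorem exists_one_lt_mul_self_le {u c : G} (hu : 1 < u) (huc : u < c) :
    ∃ η : G, 1 < η ∧ η * η ≤ c := by
  refine ⟨min u (u⁻¹ * c), lt_min hu (lt_inv_mul_iff_mul_lt.2 (by simpa using huc)), ?_⟩
  calc min u (u⁻¹ * c) * min u (u⁻¹ * c) ≤ u * (u⁻¹ * c) :=
        mul_le_mul' (min_le_left _ _) (min_le_right _ _)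
    _ = c := mul_inv_cancel_left u c

end BiOrdered

/-- `MulArchimedean` without the commutativity that Mathlib's class presupposes. -/
def IsMulArchimedean (G : Type*) [Monoid G] [Preorder G] : Prop :=
  ∀ (x : G) {y : G}, 1 < y → ∃ n : ℕ, x ≤ y ^ n

namespace IsMulArchimedean

variable {G : Type*} [Group G] [LinearOrder G] [MulLeftMono G]

theorem exists_pow_le_lt_pow_succ (harch : IsMulArchimedean G) {ε g : G} (hε : 1 < ε)
    (hg : 1 ≤ g) : ∃ m : ℕ, ε ^ m ≤ g ∧ g < ε ^ (m + 1) := by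
  classical
  have hex : ∃ n : ℕ, g < ε ^ n := by
    obtain ⟨n, hn⟩ := harch g hε
    exact ⟨n + 1, hn.trans_lt (pow_lt_pow_right' hε n.lt_succ_self)⟩
  obtain ⟨m, hm⟩ := Nat.exists_eq_add_one_of_ne_zero fun h0 : Nat.find hex = 0 =>
    (hg.trans_lt (by simpa [h0] using Nat.find_spec hex)).false
  exact ⟨m, not_lt.1 (Nat.find_min hex (by omega)), hm ▸ Nat.find_spec hex⟩

theorem exists_eq_pow_of_forall_le (harch : IsMulArchimedean G) {c g : G} (hc : 1 < c)
    (hmin : ∀ u : G, 1 < u → c ≤ u) (hg : 1 ≤ g) : ∃ m : ℕ, g = c ^ m := by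
  obtain ⟨m, hcm, hcm'⟩ := harch.exists_pow_le_lt_pow_succ hc hg
  refine ⟨m, (inv_mul_eq_one.1 ?_).symm⟩
  by_contra hne
  have hlt : (c ^ m)⁻¹ * g < c := by rwa [inv_mul_lt_iff_lt_mul, ← pow_succ]
  exact (hmin _ (lt_of_le_of_ne (by simpa using hcm) (Ne.symm hne))).not_gt hlt

variable [MulRightMono G]

theorem inv_mul_mul_lt_mul_self (harch : IsMulArchimedean G) {a b ε : G} (ha : 1 ≤ a)
    (hb : 1 ≤ b) (hε : 1 < ε) :
    (a * b)⁻¹ * (b * a) < ε * ε := by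
  obtain ⟨m, ham, ham'⟩ := harch.exists_pow_le_lt_pow_succ hε ha
  obtain ⟨k, hbk, hbk'⟩ := harch.exists_pow_le_lt_pow_succ hε hb
  rw [inv_mul_lt_iff_lt_mul]
  calc b * a < ε ^ (k + 1) * ε ^ (m + 1) := mul_lt_mul_of_lt_of_lt hbk' ham'
    _ = ε ^ m * ε ^ k * (ε * ε) := by
        rw [← pow_add, ← pow_add, ← sq, ← pow_add]
        ring_nf
    _ ≤ a * b * (ε * ε) := mul_le_mul_left (mul_le_mul' ham hbk) _

/-- If `a * b < b * a`, the element `c = (a * b)⁻¹ * (b * a) > 1` is smaller than `ε²` for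
every `ε > 1`. So either `c` is the least element above `1`, and then `a` and `b` are powers of
`c`, or some `1 < u < c` yields `ε` with `ε² ≤ c`; both are absurd. -/
theorem commute_of_one_le (harch : IsMulArchimedean G) {a b : G} (ha : 1 ≤ a) (hb : 1 ≤ b) :
    Commute a b := by
  suffices h : ∀ a b : G, 1 ≤ a → 1 ≤ b → ¬ a * b < b * a from
    le_antisymm (not_lt.1 (h b a hb ha)) (not_lt.1 (h a b ha hb))
  intro a b ha hb hlt
  have hc : 1 < (a * b)⁻¹ * (b * a) := lt_inv_mul_iff_mul_lt.2 (by simpa using hlt)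
  by_cases hmin : ∃ u : G, 1 < u ∧ u < (a * b)⁻¹ * (b * a)
  · obtain ⟨u, hu, huc⟩ := hmin
    obtain ⟨η, hη, hηc⟩ := exists_one_lt_mul_self_le hu huc
    exact (harch.inv_mul_mul_lt_mul_self ha hb hη).not_ge hηc
  · push Not at hmin
    generalize (a * b)⁻¹ * (b * a) = c at hc hmin
    obtain ⟨m, rfl⟩ := harch.exists_eq_pow_of_forall_le hc hmin ha
    obtain ⟨k, rfl⟩ := harch.exists_eq_pow_of_forall_le hc hmin hb
    exact hlt.ne (Commute.pow_pow_self _ m k).eq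

theorem commute (harch : IsMulArchimedean G) (a b : G) : Commute a b := by
  have key : ∀ a b : G, 1 ≤ a → Commute a b := fun a b ha => by
    rcases le_total 1 b with hb | hb
    · exact harch.commute_of_one_le ha hb
    · simpa using (harch.commute_of_one_le ha (Left.one_le_inv_iff.2 hb)).inv_right
  rcases le_total 1 a with ha | ha
  · exact key a b ha
  · simpa using (key a⁻¹ b (Left.one_le_inv_iff.2 ha)).inv_left

/-- Hölder's theorem. -/
theorem exists_strictMono_hom_real (harch : IsMulArchimedean G) :
    ∃ f : G → ℝ, (∀ x y, f (x * y) = f x + f y) ∧ StrictMono f := by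
  let _ : CommGroup G := { ‹Group G› with mul_comm := fun a b => (harch.commute a b).eq }
  have : IsOrderedMonoid G :=
    ⟨fun _ _ h c => mul_le_mul_left h c, fun _ _ h c => mul_le_mul_right h c⟩
  have : MulArchimedean G := ⟨harch⟩
  obtain ⟨f, hf⟩ := Archimedean.exists_orderAddMonoidHom_real_injective (Additive G)
  exact ⟨fun x => f (.ofMul x), fun x y => map_add f _ _,
    (f.monotone'.strictMono_of_injective hf).comp fun _ _ h => h⟩

end IsMulArchimedean

namespace QuotientGroup

variable {G : Type*} [Group G] [LinearOrder G] [MulLeftMono G] [MulRightMono G]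
  {N : Subgroup G}

theorem lt_of_le_of_mk_ne (hN : (N : Set G).OrdConnected) {a b a' b' : G} (hab : a ≤ b)
    (hne : (a : G ⧸ N) ≠ b) (ha : (a' : G ⧸ N) = a) (hb : (b' : G ⧸ N) = b) : a' < b' := by
  rw [Ne, QuotientGroup.eq] at hne
  rw [QuotientGroup.eq] at ha hb
  refine lt_of_not_ge fun hba => hne (hN.out N.one_mem (mul_mem (inv_mem ha) hb) ⟨?_, ?_⟩)
  · simpa using hab
  · calc a⁻¹ * b = (a'⁻¹ * a)⁻¹ * (a'⁻¹ * b') * (b'⁻¹ * b) := by group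
      _ ≤ (a'⁻¹ * a)⁻¹ * 1 * (b'⁻¹ * b) := by gcongr; exact inv_mul_le_one_iff.2 hba
      _ = (a'⁻¹ * a)⁻¹ * (b'⁻¹ * b) := by rw [mul_one]

/-- Well defined because distinct cosets of a convex subgroup are ordered by any choice of
representatives (`lt_of_le_of_mk_ne`). -/
noncomputable instance [hN : Fact (N : Set G).OrdConnected] : LinearOrder (G ⧸ N) where
  le p q := ∃ a b : G, (a : G ⧸ N) = p ∧ (b : G ⧸ N) = q ∧ a ≤ b
  le_refl p := by
    obtain ⟨a, rfl⟩ := mk_surjective p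
    exact ⟨a, a, rfl, rfl, le_rfl⟩
  le_trans := by
    rintro _ _ _ ⟨a, b, rfl, rfl, hab⟩ ⟨b', c, hb', rfl, hbc⟩
    by_cases hne : (a : G ⧸ N) = b
    · exact ⟨b', c, hb'.trans hne.symm, rfl, hbc⟩
    · exact ⟨a, c, rfl, rfl, (lt_of_le_of_mk_ne hN.out hab hne rfl hb').le.trans hbc⟩
  le_antisymm := by
    rintro _ _ ⟨a, b, rfl, rfl, hab⟩ ⟨b', a', hb, ha, hba⟩
    by_contra hne
    exact (lt_of_le_of_mk_ne hN.out hab hne ha hb).not_ge hba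
  le_total p q := by
    obtain ⟨a, rfl⟩ := mk_surjective p
    obtain ⟨b, rfl⟩ := mk_surjective q
    exact (le_total a b).imp (fun h => ⟨a, b, rfl, rfl, h⟩) fun h => ⟨b, a, rfl, rfl, h⟩
  toDecidableLE := Classical.decRel _

variable [Fact (N : Set G).OrdConnected]

theorem mk_monotone : Monotone (QuotientGroup.mk : G → G ⧸ N) :=
  fun a b h => ⟨a, b, rfl, rfl, h⟩

variable [N.Normal]

instance : MulLeftMono (G ⧸ N) := by
  refine ⟨fun p _ _ ⟨a, b, ha, hb, hab⟩ => ?_⟩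
  obtain ⟨g, rfl⟩ := mk_surjective p
  exact ⟨g * a, g * b, by rw [← ha]; rfl, by rw [← hb]; rfl, mul_le_mul_right hab g⟩

instance : MulRightMono (G ⧸ N) := by
  refine ⟨fun p _ _ ⟨a, b, ha, hb, hab⟩ => ?_⟩
  obtain ⟨g, rfl⟩ := mk_surjective p
  exact ⟨a * g, b * g, by rw [← ha]; rfl, by rw [← hb]; rfl, mul_le_mul_left hab g⟩

theorem one_lt_mk {a : G} (ha : 1 < a) (haN : a ∉ N) : (1 : G ⧸ N) < a :=
  lt_of_le_of_ne (mk_monotone ha.le) fun h => haN ((QuotientGroup.eq_one_iff a).1 h.symm)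

theorem one_lt_and_notMem_of_one_lt_mk {a : G} (ha : (1 : G ⧸ N) < a) : 1 < a ∧ a ∉ N :=
  ⟨lt_of_not_ge fun h => (mk_monotone h).not_gt ha,
    fun haN => ha.ne' ((QuotientGroup.eq_one_iff a).2 haN)⟩

theorem isMulArchimedean_of_maximal
    (hmax : ∀ E : Subgroup G, (E : Set G).OrdConnected → N < E → E = ⊤) :
    IsMulArchimedean (G ⧸ N) := by
  intro x y hy
  obtain ⟨g, rfl⟩ := mk_surjective x
  obtain ⟨p, rfl⟩ := mk_surjective y
  obtain ⟨hp, hpN⟩ := one_lt_and_notMem_of_one_lt_mk hy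
  have hNE : N < Subgroup.boundedByPowers p := by
    have hpE : p ∈ Subgroup.boundedByPowers p :=
      ⟨1, by simpa using (inv_le_one'.2 hp.le).trans hp.le, by simp⟩
    refine SetLike.lt_iff_le_and_exists.2 ⟨fun c hc => ⟨1, ?_, ?_⟩, p, hpE, hpN⟩
    · simpa using (Subgroup.inv_lt_of_ordConnected Fact.out hp.le hpN hc).le
    · simpa using (Subgroup.lt_of_ordConnected Fact.out hp.le hpN hc).le
  have hg : g ∈ Subgroup.boundedByPowers p :=
    hmax _ (Subgroup.ordConnected_boundedByPowers hp.le) hNE ▸ Subgroup.mem_top g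
  obtain ⟨n, -, hgn⟩ := hg
  exact ⟨n, by simpa using mk_monotone (N := N) hgn⟩

end QuotientGroup

namespace Subgroup

variable {G : Type*} [Group G] [LinearOrder G] {C D : Subgroup G}

instance [MulLeftMono G] : MulLeftMono D := ⟨fun a _ _ h => mul_le_mul_right (α := G) h a⟩

instance [MulRightMono G] : MulRightMono D := ⟨fun a _ _ h => mul_le_mul_left (α := G) h a⟩

theorem ordConnected_subgroupOf (hC : (C : Set G).OrdConnected) :
    (C.subgroupOf D : Set D).OrdConnected := by
  rw [coe_subgroupOf]
  exact hC.preimage_mono fun _ _ h => h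

theorem ordConnected_map_subtype (hD : (D : Set G).OrdConnected) {E : Subgroup D}
    (hE : (E : Set D).OrdConnected) : (E.map D.subtype : Set G).OrdConnected := by
  refine ⟨?_⟩
  rintro _ ⟨x, hx, rfl⟩ _ ⟨z, hz, rfl⟩ y hy
  exact ⟨⟨y, hD.out x.2 z.2 hy⟩, hE.out hx hz hy, rfl⟩

theorem eq_top_of_subgroupOf_lt (hD : (D : Set G).OrdConnected) (hCD : C ≤ D)
    (hjump : ∀ E : Subgroup G, (E : Set G).OrdConnected → C < E → ¬ E < D)
    (E : Subgroup D) (hE : (E : Set D).OrdConnected) (hCE : C.subgroupOf D < E) : E = ⊤ := by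
  have hCE' : C < E.map D.subtype :=
    map_subgroupOf_eq_of_le hCD ▸ (map_lt_map_iff_of_injective D.subtype_injective).2 hCE
  have hED : E.map D.subtype = (⊤ : Subgroup D).map D.subtype := by
    rw [← MonoidHom.range_eq_map, range_subtype]
    exact (map_subtype_le E).eq_of_not_lt (hjump _ (ordConnected_map_subtype hD hE) hCE')
  exact map_injective D.subtype_injective hED

end Subgroup

theorem IsBiOrder.isStrictTotalOrder {G : Type*} [Group G] {r : G → G → Prop}
    (hr : IsBiOrder r) : IsStrictTotalOrder G r where
  irrefl := hr.irrefl
  trans := hr.trans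
  trichotomous a b hab hba := by_contra fun hne => (hr.total a b hne).elim hab hba

/-- (Conrad) For every convex jump `C < D` in a bi-ordered group there is a homomorphism
`φ : D → (ℝ, +)` with kernel `C` which is positive on the positive elements of `D \\ C`. -/
theorem conrad_homomorphism_exists {G : Type*} [Group G]
    (r : G → G → Prop) (hr : IsBiOrder r)
    (C D : Subgroup G) (hCD : IsConvexJump r C D) :
    ∃ φ : D → ℝ, (∀ x y : D, φ (x * y) = φ x + φ y) ∧
      (∀ x : D, φ x = 0 ↔ (x : G) ∈ C) ∧
      (∀ x : D, r 1 (x : G) → (x : G) ∉ C → 0 < φ x) := by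
  classical
  have := hr.isStrictTotalOrder
  let _ := linearOrderOfSTO r
  have : MulLeftStrictMono G := ⟨fun c _ _ h => hr.mul_left _ _ c h⟩
  have : MulRightStrictMono G := ⟨fun c _ _ h => hr.mul_right _ _ c h⟩
  have := mulLeftMono_of_mulLeftStrictMono G
  have := mulRightMono_of_mulRightStrictMono G
  have convex {E : Subgroup G} : IsConvexSubgroup r E ↔ (E : Set G).OrdConnected :=
    ⟨fun hE => ⟨fun a ha b hb g hg => hE a b g ha hb hg.1.symm hg.2.symm⟩,
      fun hE a b g ha hb hag hgb => hE.out ha hb ⟨hag.symm, hgb.symm⟩⟩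
  obtain ⟨hC, hD, hCD, hjump⟩ := hCD
  have : Fact (C.subgroupOf D : Set D).OrdConnected :=
    ⟨Subgroup.ordConnected_subgroupOf (convex.1 hC)⟩
  have hmax := Subgroup.eq_top_of_subgroupOf_lt (convex.1 hD) hCD.le
    fun E hE => hjump E (convex.2 hE)
  have : (C.subgroupOf D).Normal := Subgroup.normal_of_ordConnected_of_maximal Fact.out
    (Subgroup.subgroupOf_eq_top.not.2 (not_le_of_gt hCD)) hmax
  obtain ⟨f, hf, hfmono⟩ :=
    (QuotientGroup.isMulArchimedean_of_maximal hmax).exists_strictMono_hom_real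
  have hf1 : f 1 = 0 := by simpa using hf 1 1
  refine ⟨fun x => f x, fun x y => hf x y, fun x => ?_, fun x hx hxC => ?_⟩
  · rw [hfmono.injective.eq_iff' hf1, QuotientGroup.eq_one_iff, Subgroup.mem_subgroupOf]
  · exact hf1 ▸ hfmono (QuotientGroup.one_lt_mk hx hxC)
end

section
/- Let < be a bi-order on a group G, let C < D be a convex jump, and let φ₁, φ₂ : D → (ℝ, +) be group homomorphisms with ker φᵢ = C and φᵢ(g) > 0 for every g ∈ D with 1 < g and g ∉ C (i = 1, 2). Then there exists a real number c > 0 such that φ₂(g) = c·φ₁(g) for all g ∈ D. -/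
section Aux
variable {H : Type*} [Group H]

lemma aux_one {φ : H → ℝ} (hadd : ∀ x y, φ (x*y) = φ x + φ y) : φ 1 = 0 := by
  have := hadd 1 1; simp at this; linarith

lemma aux_inv {φ : H → ℝ} (hadd : ∀ x y, φ (x*y) = φ x + φ y) (x : H) : φ x⁻¹ = - φ x := by
  have := hadd x x⁻¹; simp [aux_one hadd] at this; linarith

lemma aux_pow {φ : H → ℝ} (hadd : ∀ x y, φ (x*y) = φ x + φ y) (x : H) (n : ℕ) :
    φ (x ^ n) = n * φ x := by
  induction n with
  | zero => simp [aux_one hadd]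
  | succ n ih => rw [pow_succ, hadd, ih]; push_cast; ring

lemma aux_zpow {φ : H → ℝ} (hadd : ∀ x y, φ (x*y) = φ x + φ y) (x : H) (n : ℤ) :
    φ (x ^ n) = n * φ x := by
  cases n with
  | ofNat m => simpa using aux_pow hadd x m
  | negSucc m => rw [zpow_negSucc, aux_inv hadd, aux_pow hadd]; push_cast; ring

lemma aux_half {φ₁ φ₂ : H → ℝ}
    (hadd₁ : ∀ x y, φ₁ (x*y) = φ₁ x + φ₁ y)
    (hadd₂ : ∀ x y, φ₂ (x*y) = φ₂ x + φ₂ y)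
    (hsign : ∀ y, φ₁ y < 0 → φ₂ y < 0)
    (g : H) (hg1 : 0 < φ₁ g) (hg2 : 0 < φ₂ g) (x : H) :
    φ₂ x * φ₁ g ≤ φ₁ x * φ₂ g := by
  by_contra h
  push_neg at h
  have h1 : φ₁ x / φ₁ g < φ₂ x / φ₂ g := by
    rw [div_lt_div_iff₀ hg1 hg2]; linarith
  obtain ⟨q, hq1, hq2⟩ := exists_rat_btwn h1
  set y := x ^ (q.den : ℤ) * g ^ (-q.num) with hy
  have hd : (0:ℝ) < (q.den : ℝ) := by exact_mod_cast q.pos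
  have hnum : (q:ℝ) * (q.den : ℝ) = (q.num : ℝ) := by
    rw [Rat.cast_def]; field_simp
  have hφ₁y : φ₁ y < 0 := by
    rw [hy, hadd₁, aux_zpow hadd₁, aux_zpow hadd₁]
    have hx : φ₁ x < (q:ℝ) * φ₁ g := by
      rw [div_lt_iff₀ hg1] at hq1; linarith
    push_cast
    nlinarith
  have hφ₂y : 0 < φ₂ y := by
    rw [hy, hadd₂, aux_zpow hadd₂, aux_zpow hadd₂]
    have hx : (q:ℝ) * φ₂ g < φ₂ x := by
      rw [lt_div_iff₀ hg2] at hq2; linarith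
    push_cast
    nlinarith
  have := hsign y hφ₁y
  linarith

end Aux


/-- The Conrad homomorphism of a convex jump is unique up to a positive multiple. -/
theorem conrad_homomorphism_unique_up_to_scalar {G : Type*} [Group G]
    (r : G → G → Prop) (hr : IsBiOrder r)
    (C D : Subgroup G) (hCD : IsConvexJump r C D)
    (φ₁ φ₂ : D → ℝ)
    (hadd₁ : ∀ x y : D, φ₁ (x * y) = φ₁ x + φ₁ y)
    (hker₁ : ∀ x : D, φ₁ x = 0 ↔ (x : G) ∈ C)
    (hpos₁ : ∀ x : D, r 1 (x : G) → (x : G) ∉ C → 0 < φ₁ x)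
    (hadd₂ : ∀ x y : D, φ₂ (x * y) = φ₂ x + φ₂ y)
    (hker₂ : ∀ x : D, φ₂ x = 0 ↔ (x : G) ∈ C)
    (hpos₂ : ∀ x : D, r 1 (x : G) → (x : G) ∉ C → 0 < φ₂ x) :
    ∃ c : ℝ, 0 < c ∧ ∀ x : D, φ₂ x = c * φ₁ x := by
  -- sign equivalence
  have hsign : ∀ (ψ₁ ψ₂ : D → ℝ), (∀ x y : D, ψ₁ (x * y) = ψ₁ x + ψ₁ y) →
      (∀ x y : D, ψ₂ (x * y) = ψ₂ x + ψ₂ y) →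
      (∀ x : D, ψ₁ x = 0 ↔ (x : G) ∈ C) →
      (∀ x : D, r 1 (x : G) → (x : G) ∉ C → 0 < ψ₁ x) →
      (∀ x : D, r 1 (x : G) → (x : G) ∉ C → 0 < ψ₂ x) →
      ∀ y : D, ψ₁ y < 0 → ψ₂ y < 0 := by
    intro ψ₁ ψ₂ ha1 ha2 hk1 hp1 hp2 y hy
    have hyC : (y : G) ∉ C := by
      intro hC
      rw [← hk1] at hC
      linarith
    have hne : (y : G) ≠ 1 := by
      intro h
      exact hyC (h ▸ C.one_mem)
    rcases hr.total 1 (y : G) (Ne.symm hne) with h | h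
    · have := hp1 y h hyC; linarith
    · have hinv : r 1 ((y : G)⁻¹) := by
        have := hr.mul_left _ _ ((y : G)⁻¹) h
        simpa using this
      have hinvC : ((y⁻¹ : D) : G) ∉ C := by
        intro hC
        apply hyC
        simpa using C.inv_mem hC
      have h2 := hp2 y⁻¹ (by simpa using hinv) hinvC
      have := aux_inv ha2 y
      linarith
  have hsign₁₂ := hsign φ₁ φ₂ hadd₁ hadd₂ hker₁ hpos₁ hpos₂
  have hsign₂₁ := hsign φ₂ φ₁ hadd₂ hadd₁ hker₂ hpos₂ hpos₁
  -- choose g with 0 < φ₁ g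
  obtain ⟨d, hdD, hdC⟩ := SetLike.exists_of_lt hCD.2.2.1
  have hpos : ∀ y : D, (y : G) ∉ C → φ₁ y ≠ 0 ∧ (0 < φ₁ y ↔ 0 < φ₂ y) := by
    intro y hyC
    have h1 : φ₁ y ≠ 0 := fun h => hyC ((hker₁ y).mp h)
    have h2 : φ₂ y ≠ 0 := fun h => hyC ((hker₂ y).mp h)
    refine ⟨h1, ⟨fun h => ?_, fun h => ?_⟩⟩
    · rcases lt_trichotomy (φ₂ y) 0 with hl | hl | hl
      · have := hsign₂₁ y hl; linarith
      · exact absurd hl h2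
      · exact hl
    · rcases lt_trichotomy (φ₁ y) 0 with hl | hl | hl
      · have := hsign₁₂ y hl; linarith
      · exact absurd hl h1
      · exact hl
  have hex : ∃ g : D, 0 < φ₁ g ∧ 0 < φ₂ g := by
    set g₀ : D := ⟨d, hdD⟩ with hg₀
    have hg₀C : (g₀ : G) ∉ C := hdC
    obtain ⟨h1, h2⟩ := hpos g₀ hg₀C
    rcases lt_trichotomy (φ₁ g₀) 0 with hl | hl | hl
    · refine ⟨g₀⁻¹, ?_, ?_⟩
      · rw [aux_inv hadd₁]; linarith
      · have hinvC : ((g₀⁻¹ : D) : G) ∉ C := by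
          intro hC; apply hg₀C; simpa using C.inv_mem hC
        obtain ⟨h1', h2'⟩ := hpos g₀⁻¹ hinvC
        rw [← h2']
        rw [aux_inv hadd₁]; linarith
    · exact absurd hl h1
    · exact ⟨g₀, hl, h2.mp hl⟩
  obtain ⟨g, hg1, hg2⟩ := hex
  refine ⟨φ₂ g / φ₁ g, div_pos hg2 hg1, fun x => ?_⟩
  have hle1 := aux_half hadd₁ hadd₂ hsign₁₂ g hg1 hg2 x
  have hle2 := aux_half hadd₂ hadd₁ hsign₂₁ g hg2 hg1 x
  have heq : φ₂ x * φ₁ g = φ₁ x * φ₂ g := le_antisymm hle1 (by linarith)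
  field_simp
  linarith
end

section
/- Let < be a bi-order on a group G, let C < D be a convex jump with Conrad homomorphism φ : D → (ℝ, +), and let g ∈ G satisfy gCg⁻¹ = C and gDg⁻¹ = D. Then there exists a unique real number α_g > 0 such that φ(g h g⁻¹) = α_g · φ(h) for all h ∈ D. -/
namespace AddMonoidHom

variable {A : Type*} [AddGroup A]

lemma rat_lt_div_iff (f : A →+ ℝ) {d : A} (hd : 0 < f d) (x : A) (q : ℚ) :
    (q : ℝ) < f x / f d ↔ 0 < f ((q.den : ℤ) • x - q.num • d) := by
  have hden : (0 : ℝ) < q.den := mod_cast q.pos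
  rw [map_sub, map_zsmul, map_zsmul, lt_div_iff₀ hd, Rat.cast_def, div_mul_eq_mul_div,
    div_lt_iff₀ hden, sub_pos, zsmul_eq_mul, zsmul_eq_mul]
  push_cast
  rw [mul_comm (f x)]

/-- The sign of `f (n • x - m • d)` tells which rationals lie below `f x / f d`. -/
theorem existsUnique_pos_mul_of_pos_iff (f₁ f₂ : A →+ ℝ) (hf₁ : f₁ ≠ 0)
    (hpos : ∀ x, 0 < f₁ x ↔ 0 < f₂ x) : ∃! c : ℝ, 0 < c ∧ ∀ x, f₂ x = c * f₁ x := by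
  obtain ⟨d, hd₁⟩ : ∃ d, 0 < f₁ d := by
    obtain ⟨d, hd⟩ := DFunLike.ne_iff.mp hf₁
    rcases (show f₁ d ≠ 0 from hd).lt_or_gt with hneg | hpos'
    · exact ⟨-d, by simpa using hneg⟩
    · exact ⟨d, hpos'⟩
  have hd₂ : 0 < f₂ d := (hpos d).mp hd₁
  have hratio : ∀ x, f₂ x / f₂ d = f₁ x / f₁ d := fun x =>
    eq_of_forall_rat_lt_iff_lt fun q => by
      rw [rat_lt_div_iff f₁ hd₁, rat_lt_div_iff f₂ hd₂, hpos]
  refine ⟨f₂ d / f₁ d, ⟨div_pos hd₂ hd₁, fun x => ?_⟩, fun c ⟨_, hc⟩ => ?_⟩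
  · rw [div_mul_comm, ← hratio, div_mul_cancel₀ _ hd₂.ne']
  · rw [hc d, mul_div_cancel_right₀ _ hd₁.ne']

end AddMonoidHom

namespace IsBiOrder

variable {G : Type*} [Group G] {r : G → G → Prop}

lemma one_lt_conj_of_one_lt (hr : IsBiOrder r) (g : G) {x : G} (hx : r 1 x) :
    r 1 (g * x * g⁻¹) := by
  simpa using hr.mul_right _ _ g⁻¹ (hr.mul_left _ _ g hx)

lemma one_lt_conj_iff (hr : IsBiOrder r) (g x : G) : r 1 (g * x * g⁻¹) ↔ r 1 x :=
  ⟨fun h => by simpa [mul_assoc] using hr.one_lt_conj_of_one_lt g⁻¹ h,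
    hr.one_lt_conj_of_one_lt g⟩

lemma conrad_pos_iff (hr : IsBiOrder r) {C D : Subgroup G} {φ : D → ℝ}
    (hadd : ∀ x y : D, φ (x * y) = φ x + φ y)
    (hker : ∀ x : D, φ x = 0 ↔ (x : G) ∈ C)
    (hpos : ∀ x : D, r 1 (x : G) → (x : G) ∉ C → 0 < φ x) (x : D) :
    0 < φ x ↔ r 1 (x : G) ∧ (x : G) ∉ C := by
  refine ⟨fun hx => ?_, fun ⟨h1, hC⟩ => hpos x h1 hC⟩
  have hxC : (x : G) ∉ C := fun hc => hx.ne' ((hker x).mpr hc)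
  refine ⟨by_contra fun hnot => ?_, hxC⟩
  have hx1 : (x : G) ≠ 1 := fun h => hxC (h ▸ C.one_mem)
  have hinv : r 1 (x⁻¹ : D) := by
    simpa using hr.mul_left _ _ (x : G)⁻¹ ((hr.total _ _ hx1.symm).resolve_left hnot)
  have hinvC : ((x⁻¹ : D) : G) ∉ C := fun hc => hxC (by simpa using C.inv_mem hc)
  have hone : φ (x * x⁻¹) = 0 := by simpa using (hker 1).mpr C.one_mem
  linarith [hadd x x⁻¹, hpos _ hinv hinvC]

end IsBiOrder

/-- If `g` normalizes both subgroups of a convex jump `C < D`, then conjugation by `g`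
corresponds, through the Conrad homomorphism `φ` of the jump, to multiplication by a
unique positive real number `α`. -/
theorem conrad_homomorphism_conjugation_scalar {G : Type*} [Group G]
    (r : G → G → Prop) (hr : IsBiOrder r)
    (C D : Subgroup G) (hCD : IsConvexJump r C D)
    (φ : D → ℝ)
    (hadd : ∀ x y : D, φ (x * y) = φ x + φ y)
    (hker : ∀ x : D, φ x = 0 ↔ (x : G) ∈ C)
    (hpos : ∀ x : D, r 1 (x : G) → (x : G) ∉ C → 0 < φ x)
    (g : G)
    (hgC : ∀ x : G, x ∈ C ↔ g * x * g⁻¹ ∈ C)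
    (hgD : ∀ x : G, x ∈ D ↔ g * x * g⁻¹ ∈ D) :
    ∃! α : ℝ, 0 < α ∧ ∀ (h : G) (hm : h ∈ D) (hm' : g * h * g⁻¹ ∈ D),
      φ ⟨g * h * g⁻¹, hm'⟩ = α * φ ⟨h, hm⟩ := by
  have hconj : ∀ x : D, g * (x : G) * g⁻¹ ∈ D := fun x => (hgD x).mp x.2
  let Φ : Additive D →+ ℝ := AddMonoidHom.mk' (fun x => φ x.toMul) fun x y => hadd x y
  let conj : D →* D := ((MulAut.conj g).toMonoidHom.comp D.subtype).codRestrict D hconj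
  have hΦ : Φ ≠ 0 := by
    obtain ⟨d, hdD, hdC⟩ := SetLike.exists_of_lt hCD.2.2.1
    exact DFunLike.ne_iff.mpr ⟨.ofMul ⟨d, hdD⟩, fun h => hdC ((hker ⟨d, hdD⟩).mp h)⟩
  have hsign : ∀ x, 0 < Φ x ↔ 0 < Φ.comp conj.toAdditive x := fun x => by
    change 0 < φ x.toMul ↔ 0 < φ ⟨g * x.toMul * g⁻¹, hconj _⟩
    rw [hr.conrad_pos_iff hadd hker hpos, hr.conrad_pos_iff hadd hker hpos, hr.one_lt_conj_iff,
      ← hgC]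
  obtain ⟨α, ⟨hα, hΦα⟩, huniq⟩ := Φ.existsUnique_pos_mul_of_pos_iff _ hΦ hsign
  exact ⟨α, ⟨hα, fun h hm _ => hΦα (.ofMul ⟨h, hm⟩)⟩,
    fun β ⟨hβ, hφβ⟩ => huniq β ⟨hβ, fun x => hφβ _ x.toMul.2 (hconj _)⟩⟩
end

section
/- Let < be a bi-order on the free group F₂ on two generators and let α, β > 0. If < is of type α and of type β, then α = β. -/
/-- `C` is the largest convex subgroup (w.r.t. `r`) not containing `g`. -/
def IsLargestConvexNotContaining {G : Type*} [Group G]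
    (r : G → G → Prop) (g : G) (C : Subgroup G) : Prop :=
  IsConvexSubgroup r C ∧ g ∉ C ∧
    ∀ E : Subgroup G, IsConvexSubgroup r E → g ∉ E → E ≤ C

/-- `D` is the smallest convex subgroup (w.r.t. `r`) containing `g`. -/
def IsSmallestConvexContaining {G : Type*} [Group G]
    (r : G → G → Prop) (g : G) (D : Subgroup G) : Prop :=
  IsConvexSubgroup r D ∧ g ∈ D ∧
    ∀ E : Subgroup G, IsConvexSubgroup r E → g ∈ E → D ≤ E

/-- `(a, b)` is a free basis of the free group on two generators. -/
def IsFreeBasis (a b : FreeGroup (Fin 2)) : Prop :=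
  Function.Bijective (FreeGroup.lift ![a, b] : FreeGroup (Fin 2) →* FreeGroup (Fin 2))

/-- A bi-order `r` on `F₂` is of type `α`: there is a free basis `(a, b)` of positive
elements with `C_a = D_b`, such that `a` normalizes both `C_b` and `D_b`, and the Conrad
homomorphism `ψ` of the jump `C_b < D_b` satisfies `ψ (a * h * a⁻¹) = α * ψ h`. -/
def IsOrderOfType (r : FreeGroup (Fin 2) → FreeGroup (Fin 2) → Prop) (α : ℝ) : Prop :=
  ∃ a b : FreeGroup (Fin 2), IsFreeBasis a b ∧ r 1 a ∧ r 1 b ∧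
    ∃ Ca Cb Db : Subgroup (FreeGroup (Fin 2)),
      IsLargestConvexNotContaining r a Ca ∧
      IsLargestConvexNotContaining r b Cb ∧
      IsSmallestConvexContaining r b Db ∧
      Ca = Db ∧
      (∀ x, x ∈ Cb ↔ a * x * a⁻¹ ∈ Cb) ∧
      (∀ x, x ∈ Db ↔ a * x * a⁻¹ ∈ Db) ∧
      ∃ ψ : Db → ℝ, (∀ x y : Db, ψ (x * y) = ψ x + ψ y) ∧
        (∀ x : Db, ψ x = 0 ↔ (x : FreeGroup (Fin 2)) ∈ Cb) ∧
        (∀ x : Db, r 1 (x : FreeGroup (Fin 2)) → (x : FreeGroup (Fin 2)) ∉ Cb → 0 < ψ x) ∧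
        (∀ (h : FreeGroup (Fin 2)) (hm : h ∈ Db) (hm' : a * h * a⁻¹ ∈ Db),
          ψ ⟨a * h * a⁻¹, hm'⟩ = α * ψ ⟨h, hm⟩)

/-!
A convex subgroup containing `a` contains `C_a = D_b ∋ b`, hence is everything; so `C_a` is the
largest proper convex subgroup, and two witnesses `(a, b)`, `(a', b')` of the types `α` and `β`
share `C_a = D_b` and `C_b`. As `a` and `b` normalize `D_b`, it is normal, and modulo `D_b` the
group is generated by `a`: thus `a' = a ^ n * m` with `m ∈ D_b`, and `n ≥ 0` since
`1 < a' ∉ D_b`.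
The two Conrad homomorphisms of the jump `C_b < D_b` are proportional, and conjugation by `m`
fixes them, so evaluating at `a' b a'⁻¹` gives `β = α ^ n`. Symmetrically `α = β ^ k`, so
`α ^ (n k) = α`, and `α = β` follows.
-/

namespace IsBiOrder

variable {G : Type*} [Group G] {r : G → G → Prop}

lemma asymm (hr : IsBiOrder r) {x y : G} (h : r x y) : ¬ r y x :=
  fun h' => hr.irrefl x (hr.trans x y x h h')

lemma one_lt_or_one_lt_inv (hr : IsBiOrder r) {x : G} (hx : x ≠ 1) : r 1 x ∨ r 1 x⁻¹ :=
  (hr.total 1 x hx.symm).imp_right fun h => by simpa using hr.mul_left _ _ x⁻¹ h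

lemma one_lt_pow_succ (hr : IsBiOrder r) {a : G} (ha : r 1 a) (n : ℕ) : r 1 (a ^ (n + 1)) := by
  induction n with
  | zero => simpa using ha
  | succ n ih =>
    rw [pow_succ]
    exact hr.trans _ _ _ ih (by simpa using hr.mul_left _ _ (a ^ (n + 1)) ha)

end IsBiOrder

namespace IsConvexSubgroup

variable {G : Type*} [Group G] {r : G → G → Prop} {C E : Subgroup G}

lemma lt_of_mem (hr : IsBiOrder r) (hC : IsConvexSubgroup r C) {g m : G} (hg : r 1 g)
    (hgC : g ∉ C) (hm : m ∈ C) : r m g :=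
  (hr.total m g fun h => hgC (h ▸ hm)).resolve_right
    fun h => hgC (hC 1 m g C.one_mem hm (Or.inl hg) (Or.inl h))

lemma exists_one_lt_mem_notMem (hr : IsBiOrder r) (h : ¬ C ≤ E) :
    ∃ c, r 1 c ∧ c ∈ C ∧ c ∉ E := by
  obtain ⟨c, hcC, hcE⟩ := SetLike.not_le_iff_exists.mp h
  rcases hr.one_lt_or_one_lt_inv (fun h : c = 1 => hcE (h ▸ E.one_mem)) with hc | hc
  · exact ⟨c, hc, hcC, hcE⟩
  · exact ⟨c⁻¹, hc, C.inv_mem hcC, fun h => hcE (inv_inv c ▸ E.inv_mem h)⟩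

lemma le_total (hr : IsBiOrder r) (hC : IsConvexSubgroup r C) (hE : IsConvexSubgroup r E) :
    C ≤ E ∨ E ≤ C := by
  by_contra! h
  obtain ⟨c, hc, hcC, hcE⟩ := exists_one_lt_mem_notMem hr h.1
  obtain ⟨e, he, heE, heC⟩ := exists_one_lt_mem_notMem hr h.2
  exact hr.asymm (hC.lt_of_mem hr he heC hcC) (hE.lt_of_mem hr hc hcE heE)

lemma mul_notMem (hr : IsBiOrder r) (hC : IsConvexSubgroup r C) {c g : G} (hc : r 1 c)
    (hg : r 1 g) (hgC : g ∉ C) : c * g ∉ C := fun hcg =>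
  hr.asymm (hC.lt_of_mem hr hg hgC hcg) (by simpa using hr.mul_right _ _ g hc)

end IsConvexSubgroup

lemma IsLargestConvexNotContaining.eq_of_isSmallestConvexContaining {G : Type*} [Group G]
    {r : G → G → Prop} {g g' : G} {C C' D : Subgroup G}
    (hC : IsLargestConvexNotContaining r g C) (hC' : IsLargestConvexNotContaining r g' C')
    (hD : IsSmallestConvexContaining r g D) (hD' : IsSmallestConvexContaining r g' D) :
    C = C' := by
  have notMem : ∀ {g g' C}, IsLargestConvexNotContaining r g C →
      IsSmallestConvexContaining r g D → IsSmallestConvexContaining r g' D → g' ∉ C :=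
    fun hC hD hD' hg' => hC.2.1 (hD'.2.2 _ hC.1 hg' hD.2.1)
  exact le_antisymm (hC'.2.2 C hC.1 (notMem hC hD hD')) (hC.2.2 C' hC'.1 (notMem hC' hD' hD))

namespace IsFreeBasis

variable {a b : FreeGroup (Fin 2)}

lemma eq_top_of_mem (hab : IsFreeBasis a b) {E : Subgroup (FreeGroup (Fin 2))} (ha : a ∈ E)
    (hb : b ∈ E) : E = ⊤ := by
  have hrange : (FreeGroup.lift ![a, b]).range ≤ E := by
    refine FreeGroup.range_lift_le ?_
    rintro _ ⟨i, rfl⟩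
    fin_cases i <;> simpa
  exact eq_top_iff.2 fun x _ => hrange (hab.2 x)

lemma le_of_isConvexSubgroup {r : FreeGroup (Fin 2) → FreeGroup (Fin 2) → Prop}
    (hr : IsBiOrder r) (hab : IsFreeBasis a b) {D E : Subgroup (FreeGroup (Fin 2))}
    (hD : IsLargestConvexNotContaining r a D) (hbD : b ∈ D) (hE : IsConvexSubgroup r E)
    (hEtop : E ≠ ⊤) : E ≤ D := by
  by_cases haE : a ∈ E
  · rcases hD.1.le_total hr hE with hDE | hED
    · exact absurd (hab.eq_top_of_mem haE (hDE hbD)) hEtop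
    · exact absurd (hED haE) hD.2.1
  · exact hD.2.2 E hE haE

lemma exists_zpow_mul_eq (hab : IsFreeBasis a b) {D : Subgroup (FreeGroup (Fin 2))} [D.Normal]
    (hb : b ∈ D) (g : FreeGroup (Fin 2)) : ∃ n : ℤ, ∃ m ∈ D, a ^ n * m = g := by
  have htop := hab.eq_top_of_mem (Subgroup.mem_sup_left (Subgroup.mem_zpowers a))
    (Subgroup.mem_sup_right hb)
  have hg : g ∈ ((Subgroup.zpowers a ⊔ D : Subgroup _) : Set (FreeGroup (Fin 2))) := by
    simp [htop]
  rw [Subgroup.mul_normal] at hg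
  obtain ⟨_, ⟨n, rfl⟩, m, hm, rfl⟩ := hg
  exact ⟨n, m, hm, rfl⟩

end IsFreeBasis

section AdditiveMap

variable {H : Type*} [Group H] {ψ : H → ℝ}

lemma map_zpow_of_map_mul (hψ : ∀ x y, ψ (x * y) = ψ x + ψ y) (x : H) (n : ℤ) :
    ψ (x ^ n) = n * ψ x :=
  (map_zsmul (AddMonoidHom.mk' (fun y : Additive H => ψ y.toMul) hψ) n
    (Additive.ofMul x)).trans (zsmul_eq_mul _ _)

lemma map_conj_of_map_mul (hψ : ∀ x y, ψ (x * y) = ψ x + ψ y) (g x : H) :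
    ψ (g * x * g⁻¹) = ψ x := by
  rw [hψ, hψ, ← zpow_neg_one, map_zpow_of_map_mul hψ]
  push_cast
  ring

lemma map_mulAut_pow_apply {σ : MulAut H} {α : ℝ} (hσ : ∀ x, ψ (σ x) = α * ψ x) (n : ℕ)
    (x : H) : ψ ((σ ^ n) x) = α ^ n * ψ x := by
  induction n generalizing x with
  | zero => simp
  | succ n ih => rw [pow_succ, MulAut.mul_apply, ih, hσ]; ring

/-- Hölder's argument: if `ψ x / ψ b > ψ' x / ψ' b`, a rational `p / q` in between gives
`y = x ^ q * b ^ (-p)` with `ψ y > 0 ≥ ψ' y`. -/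
lemma mul_le_mul_of_pos_imp_pos {ψ' : H → ℝ} (hψ : ∀ x y, ψ (x * y) = ψ x + ψ y)
    (hψ' : ∀ x y, ψ' (x * y) = ψ' x + ψ' y) (hpos : ∀ y, 0 < ψ y → 0 < ψ' y) {b : H}
    (hb : 0 < ψ b) (x : H) : ψ x * ψ' b ≤ ψ' x * ψ b := by
  have hb' := hpos b hb
  by_contra! h
  obtain ⟨q, hq', hq⟩ := exists_rat_btwn
    ((div_lt_div_iff₀ hb' hb).2 (by linarith) : ψ' x / ψ' b < ψ x / ψ b)
  rw [Rat.cast_def, div_lt_div_iff₀ (by positivity) hb] at hq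
  rw [Rat.cast_def, div_lt_div_iff₀ hb' (by positivity)] at hq'
  have hy := hpos (x ^ (q.den : ℤ) * b ^ (-q.num)) (by
    rw [hψ, map_zpow_of_map_mul hψ, map_zpow_of_map_mul hψ]
    push_cast
    linarith)
  rw [hψ', map_zpow_of_map_mul hψ', map_zpow_of_map_mul hψ'] at hy
  push_cast at hy
  linarith

end AdditiveMap

structure IsConradHom {G : Type*} [Group G] (r : G → G → Prop) (C D : Subgroup G)
    (ψ : D → ℝ) : Prop where
  map_mul : ∀ x y, ψ (x * y) = ψ x + ψ y
  eq_zero_iff : ∀ x, ψ x = 0 ↔ (x : G) ∈ C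
  pos_of_one_lt : ∀ x : D, r 1 (x : G) → (x : G) ∉ C → 0 < ψ x

namespace IsConradHom

variable {G : Type*} [Group G] {r : G → G → Prop} {C D : Subgroup G} {ψ ψ' : D → ℝ}

lemma pos_iff (hr : IsBiOrder r) (hψ : IsConradHom r C D ψ) (x : D) :
    0 < ψ x ↔ r 1 (x : G) ∧ (x : G) ∉ C := by
  refine ⟨fun hx => ?_, fun hx => hψ.pos_of_one_lt x hx.1 hx.2⟩
  have hxC : (x : G) ∉ C := fun h => hx.ne' ((hψ.eq_zero_iff x).2 h)
  refine ⟨(hr.one_lt_or_one_lt_inv fun h : (x : G) = 1 => hxC (h ▸ C.one_mem)).resolve_right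
    fun hinv => ?_, hxC⟩
  have hinv := hψ.pos_of_one_lt x⁻¹ hinv fun h => hxC (by simpa using C.inv_mem h)
  rw [← zpow_neg_one, map_zpow_of_map_mul hψ.map_mul] at hinv
  push_cast at hinv
  linarith

lemma mul_eq_mul (hr : IsBiOrder r) (hψ : IsConradHom r C D ψ) (hψ' : IsConradHom r C D ψ')
    {b : D} (hb : 0 < ψ b) (x : D) : ψ' x * ψ b = ψ x * ψ' b := by
  have hsame : ∀ y, 0 < ψ y ↔ 0 < ψ' y := fun y =>
    (hψ.pos_iff hr y).trans (hψ'.pos_iff hr y).symm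
  exact le_antisymm
    (mul_le_mul_of_pos_imp_pos hψ'.map_mul hψ.map_mul (fun y => (hsame y).2)
      ((hsame b).1 hb) x)
    (mul_le_mul_of_pos_imp_pos hψ.map_mul hψ'.map_mul (fun y => (hsame y).1) hb x)

lemma scale_eq_pow (hr : IsBiOrder r) [D.Normal] (hψ : IsConradHom r C D ψ)
    (hψ' : IsConradHom r C D ψ') {a m : G} (hm : m ∈ D) {α β : ℝ} {n : ℕ}
    (hα : ∀ x : D, ψ (MulAut.conjNormal a x) = α * ψ x)
    (hβ : ∀ x : D, ψ' (MulAut.conjNormal (a ^ n * m) x) = β * ψ' x) {b : D}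
    (hb : r 1 (b : G)) (hbC : (b : G) ∉ C) : β = α ^ n := by
  have hconj_m : ∀ x : D, ψ (MulAut.conjNormal m x) = ψ x :=
    map_conj_of_map_mul hψ.map_mul ⟨m, hm⟩
  have hscale : ψ (MulAut.conjNormal (a ^ n * m) b) = α ^ n * ψ b := by
    rw [_root_.map_mul, MulAut.mul_apply, map_pow, map_mulAut_pow_apply hα, hconj_m]
  have hψb := hψ.pos_of_one_lt b hb hbC
  have hψ'b := hψ'.pos_of_one_lt b hb hbC
  refine mul_right_cancel₀ (mul_pos hψ'b hψb).ne' ?_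
  calc β * (ψ' b * ψ b) = ψ' (MulAut.conjNormal (a ^ n * m) b) * ψ b := by rw [hβ]; ring
    _ = ψ (MulAut.conjNormal (a ^ n * m) b) * ψ' b := hψ.mul_eq_mul hr hψ' hψb _
    _ = α ^ n * (ψ' b * ψ b) := by rw [hscale]; ring

end IsConradHom

lemma IsOrderOfType.exists_eq_pow {r : FreeGroup (Fin 2) → FreeGroup (Fin 2) → Prop}
    (hr : IsBiOrder r) {α β : ℝ} (h1 : IsOrderOfType r α) (h2 : IsOrderOfType r β) :
    ∃ n : ℕ, β = α ^ n := by
  obtain ⟨a, b, hab, ha, hb, D, C, _, hCa, hCb, hD, rfl, -, hnorm,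
    ψ, ψmul, ψker, ψpos, ψconj⟩ := h1
  obtain ⟨a', b', hab', ha', -, D', C', _, hCa', hCb', hD', rfl, -, -,
    ψ', ψ'mul, ψ'ker, ψ'pos, ψ'conj⟩ := h2
  have ne_top : ∀ {g : FreeGroup (Fin 2)} {C}, IsLargestConvexNotContaining r g C → C ≠ ⊤ :=
    fun hC hC_top => hC.2.1 (hC_top ▸ Subgroup.mem_top _)
  obtain rfl : D = D' := le_antisymm
    (hab'.le_of_isConvexSubgroup hr hCa' hD'.2.1 hCa.1 (ne_top hCa))
    (hab.le_of_isConvexSubgroup hr hCa hD.2.1 hCa'.1 (ne_top hCa'))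
  obtain rfl := hCb.eq_of_isSmallestConvexContaining hCb' hD hD'
  have : D.Normal := Subgroup.normalizer_eq_top_iff.1 <|
    hab.eq_top_of_mem (Subgroup.mem_normalizer_iff.2 hnorm) (Subgroup.le_normalizer hD.2.1)
  obtain ⟨n | k, m, hm, rfl⟩ := hab.exists_zpow_mul_eq hD.2.1 a'
  · refine ⟨n, IsConradHom.scale_eq_pow hr ⟨ψmul, ψker, ψpos⟩ ⟨ψ'mul, ψ'ker, ψ'pos⟩ hm
      (fun x => ψconj x x.2 _) (fun x => ψ'conj x x.2 _) (b := ⟨b, hD.2.1⟩) hb hCb.2.1⟩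
  · refine absurd ?_ (hCa.1.mul_notMem hr (hr.one_lt_pow_succ ha k) ha' hCa'.2.1)
    simpa [zpow_negSucc] using hm

theorem order_type_unique_general (r : FreeGroup (Fin 2) → FreeGroup (Fin 2) → Prop)
    (hr : IsBiOrder r) (α β : ℝ) (hα : 0 < α)
    (h1 : IsOrderOfType r α) (h2 : IsOrderOfType r β) : α = β := by
  obtain ⟨n, rfl⟩ := h1.exists_eq_pow hr h2
  obtain ⟨k, hk⟩ := h2.exists_eq_pow hr h1
  rcases eq_or_ne α 1 with rfl | hα1
  · simp
  · have hnk : n * k = 1 := pow_right_injective₀ hα hα1 (by simpa [← pow_mul] using hk.symm)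
    rw [Nat.eq_one_of_mul_eq_one_right hnk, pow_one]

/-- The type of a bi-order on `F₂` is well defined: a bi-order of type `α` and of
type `β` (with `α, β > 0`) forces `α = β`. -/
theorem order_type_unique (r : FreeGroup (Fin 2) → FreeGroup (Fin 2) → Prop)
    (hr : IsBiOrder r) (α β : ℝ) (hα : 0 < α) (hβ : 0 < β)
    (h1 : IsOrderOfType r α) (h2 : IsOrderOfType r β) : α = β :=
  order_type_unique_general r hr α β hα h1 h2
end

section
/- Let < be a bi-order on a group G and let Γ be a normal convex subgroup of G. Then the set P' = {g ∈ G : (1 < g and g ∉ Γ) or (g < 1 and g ∈ Γ)} is the positive cone of a bi-order on G; that is, P' ∪ P'⁻¹ = G \ {1}, P' ∩ P'⁻¹ = ∅, P'·P' ⊆ P', and gP'g⁻¹ = P' for all g ∈ G. -/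
/-- The set obtained from the positive cone of a bi-order by flipping the order on a
normal convex subgroup `Γ`. -/
def flippedCone {G : Type*} [Group G] (r : G → G → Prop) (Γ : Subgroup G) : Set G :=
  {g : G | (r 1 g ∧ g ∉ Γ) ∨ (r g 1 ∧ g ∈ Γ)}

section
variable {G : Type*} [Group G]

lemma biOrder_inv_neg {r : G → G → Prop} (hr : IsBiOrder r) {g : G} (h : r 1 g) : r g⁻¹ 1 := by
  have := hr.mul_left 1 g g⁻¹ h
  simpa using this

lemma biOrder_inv_pos {r : G → G → Prop} (hr : IsBiOrder r) {g : G} (h : r g 1) : r 1 g⁻¹ := by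
  have := hr.mul_left g 1 g⁻¹ h
  simpa using this

lemma flippedCone_conj {r : G → G → Prop} (hr : IsBiOrder r) (Γ : Subgroup G) (hN : Γ.Normal)
    (g : G) {h : G} (hh : h ∈ flippedCone r Γ) : g * h * g⁻¹ ∈ flippedCone r Γ := by
  have mem : g * h * g⁻¹ ∈ Γ ↔ h ∈ Γ := by
    constructor
    · intro hm
      have := hN.conj_mem _ hm g⁻¹
      simpa [mul_assoc] using this
    · intro hm; exact hN.conj_mem _ hm g
  rcases hh with ⟨h1, h2⟩ | ⟨h1, h2⟩
  · left
    refine ⟨?_, fun hm => h2 (mem.mp hm)⟩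
    have := hr.mul_right _ _ g⁻¹ (hr.mul_left 1 h g h1)
    simpa using this
  · right
    refine ⟨?_, mem.mpr h2⟩
    have := hr.mul_right _ _ g⁻¹ (hr.mul_left h 1 g h1)
    simpa using this

end

/-- Reversing a bi-order on a normal convex subgroup yields the positive cone of a
bi-order on the whole group. -/
theorem flippedCone_is_positive_cone {G : Type*} [Group G]
    (r : G → G → Prop) (hr : IsBiOrder r)
    (Γ : Subgroup G) (hN : Γ.Normal) (hconv : IsConvexSubgroup r Γ) :
    flippedCone r Γ ∪ (flippedCone r Γ)⁻¹ = {g : G | g ≠ 1} ∧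
    flippedCone r Γ ∩ (flippedCone r Γ)⁻¹ = ∅ ∧
    (∀ a ∈ flippedCone r Γ, ∀ b ∈ flippedCone r Γ, a * b ∈ flippedCone r Γ) ∧
    (∀ g : G, (fun p => g * p * g⁻¹) '' flippedCone r Γ = flippedCone r Γ) := by

  constructor
  · ext g
    simp only [Set.mem_union, Set.mem_inv, Set.mem_setOf_eq]
    constructor
    · rintro (h | h)
      · rintro rfl
        rcases h with ⟨h1, _⟩ | ⟨h1, _⟩ <;> exact hr.irrefl 1 h1
      · rintro rfl
        simp only [inv_one] at h
        rcases h with ⟨h1, _⟩ | ⟨h1, _⟩ <;> exact hr.irrefl 1 h1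
    · intro hg
      rcases hr.total 1 g (fun h => hg h.symm) with h | h
      · by_cases hm : g ∈ Γ
        · right
          right
          exact ⟨biOrder_inv_neg hr h, Γ.inv_mem hm⟩
        · left; left; exact ⟨h, hm⟩
      · by_cases hm : g ∈ Γ
        · left; right; exact ⟨h, hm⟩
        · right
          left
          refine ⟨biOrder_inv_pos hr h, fun hc => hm ?_⟩
          simpa using Γ.inv_mem hc
  refine ⟨?_, ?_, ?_⟩
  · ext g
    simp only [Set.mem_inter_iff, Set.mem_inv, Set.mem_empty_iff_false, iff_false]
    rintro ⟨hg, hgi⟩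
    have hmem : g⁻¹ ∈ Γ ↔ g ∈ Γ := by
      constructor
      · intro h; simpa using Γ.inv_mem h
      · exact Γ.inv_mem
    rcases hg with ⟨h1, h2⟩ | ⟨h1, h2⟩ <;> rcases hgi with ⟨k1, k2⟩ | ⟨k1, k2⟩
    · exact hr.irrefl 1 (hr.trans _ _ _ h1 (by simpa using biOrder_inv_neg hr k1))
    · exact h2 (hmem.mp k2)
    · exact k2 (hmem.mpr h2)
    · exact hr.irrefl 1 (hr.trans _ _ _ (by simpa using biOrder_inv_pos hr k1) h1)
  · rintro a (⟨ha1, ha2⟩ | ⟨ha1, ha2⟩) b (⟨hb1, hb2⟩ | ⟨hb1, hb2⟩)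
    · -- both positive, not in Γ
      have hab : r 1 (a * b) :=
        hr.trans _ _ _ ha1 (by simpa using hr.mul_left 1 b a hb1)
      left
      refine ⟨hab, fun hm => ha2 ?_⟩
      exact hconv 1 (a * b) a Γ.one_mem hm (Or.inl ha1)
        (Or.inl (by simpa using hr.mul_left 1 b a hb1))
    · -- a positive ∉ Γ, b negative ∈ Γ
      have habm : a * b ∉ Γ := fun hm => ha2 (by simpa using Γ.mul_mem hm (Γ.inv_mem hb2))
      left
      refine ⟨?_, habm⟩
      have hne : (1 : G) ≠ a * b := fun h =>
        ha2 (by rw [eq_inv_of_mul_eq_one_left h.symm]; exact Γ.inv_mem hb2)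
      rcases hr.total 1 (a * b) hne with h | h
      · exact h
      · exact absurd (hconv b 1 (a * b) hb2 Γ.one_mem
          (Or.inl (by simpa using hr.mul_right 1 a b ha1)) (Or.inl h)) habm
    · -- a negative ∈ Γ, b positive ∉ Γ
      have habm : a * b ∉ Γ := fun hm => hb2 (by simpa using Γ.mul_mem (Γ.inv_mem ha2) hm)
      left
      refine ⟨?_, habm⟩
      have hne : (1 : G) ≠ a * b := fun h =>
        hb2 (by rw [eq_inv_of_mul_eq_one_right h.symm]; exact Γ.inv_mem ha2)
      rcases hr.total 1 (a * b) hne with h | h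
      · exact h
      · exact absurd (hconv a 1 (a * b) ha2 Γ.one_mem
          (Or.inl (by simpa using hr.mul_left 1 b a hb1)) (Or.inl h)) habm
    · -- both negative ∈ Γ
      right
      exact ⟨hr.trans _ _ _ (by simpa using hr.mul_right a 1 b ha1) hb1, Γ.mul_mem ha2 hb2⟩
  · intro g
    ext h
    simp only [Set.mem_image]
    constructor
    · rintro ⟨x, hx, rfl⟩
      exact flippedCone_conj hr Γ hN g hx
    · intro hh
      refine ⟨g⁻¹ * h * g, ?_, by group⟩
      have := flippedCone_conj hr Γ hN g⁻¹ hh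
      simpa using this
end
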